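/- arXiv:math/0609463 — 4 statements merged into one kernel-verified Lean document; each statement's English description precedes it below -/
import Mathlib

section
/- Let Z be a metric space and A, B ⊆ Z. Let 𝒰 be an open covering of A and 𝒱 an open covering of B (by open subsets of Z), both with multiplicity at most m. If mesh(𝒱) ≤ L(𝒰)/2, then there exists an open covering 𝒲 of A ∪ B with multiplicity at most m, mesh(𝒲) ≤ max{mesh(𝒱), mesh(𝒰)}, and L(𝒲) ≥ min{L(𝒰)/2, L(𝒱)}. -/
open Metric Set Filter ENNReal NNReal

noncomputable section

namespace PaperDefs

/-! ### Coverings: mesh, Lebesgue number, colorings, multiplicity -/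

/-- The mesh of a family of subsets of a metric space. -/
def meshF {Z : Type*} [PseudoMetricSpace Z] (U : Set (Set Z)) : ℝ≥0∞ :=
  ⨆ V ∈ U, EMetric.diam V

/-- The Lebesgue number of a family `U` as a covering of `A`:
`inf_{z ∈ A} sup_{V ∈ U} dist (z, Z \ V)`. -/
def lebesgueF {Z : Type*} [PseudoMetricSpace Z] (U : Set (Set Z)) (A : Set Z) : ℝ≥0∞ :=
  ⨅ z ∈ A, ⨆ V ∈ U, EMetric.infEdist z Vᶜ

def IsOpenFamily {Z : Type*} [TopologicalSpace Z] (U : Set (Set Z)) : Prop :=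
  ∀ V ∈ U, IsOpen V

def IsCoveringOf {Z : Type*} (U : Set (Set Z)) (A : Set Z) : Prop :=
  A ⊆ ⋃₀ U

/-- A family is `m`-colored if it is a union of `m` families, each consisting of
pairwise disjoint sets. -/
def IsColored {Z : Type*} (U : Set (Set Z)) (m : ℕ) : Prop :=
  ∃ F : Fin m → Set (Set Z), U = ⋃ i, F i ∧ ∀ i, (F i).Pairwise Disjoint

/-- The multiplicity of a family is at most `m`: any collection of its members with a
common point has cardinality at most `m`. -/
def MultiplicityLE {Z : Type*} (U : Set (Set Z)) (m : ℕ) : Prop :=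
  ∀ s : Finset (Set Z), ↑s ⊆ U → (⋂₀ (s : Set (Set Z))).Nonempty → s.card ≤ m

/-- An `(L, M, n)`-covering of `A`: an open `n`-colored covering with mesh at most `M`
and Lebesgue number at least `L`. -/
def IsLMNCover {Z : Type*} [PseudoMetricSpace Z] (U : Set (Set Z)) (A : Set Z)
    (L M : ℝ) (n : ℕ) : Prop :=
  IsOpenFamily U ∧ IsCoveringOf U A ∧ IsColored U n ∧
    meshF U ≤ ENNReal.ofReal M ∧ ENNReal.ofReal L ≤ lebesgueF U A

/-! ### Dimensions -/

/-- `ℓ-dim Z ≤ k`. -/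
def ElldimLE (Z : Type*) [PseudoMetricSpace Z] (k : ℕ) : Prop :=
  ∃ δ : ℝ, δ ∈ Set.Ioo (0:ℝ) 1 ∧ ∃ τ₀ : ℝ, 0 < τ₀ ∧ ∀ τ : ℝ, 0 < τ → τ < τ₀ →
    ∃ U : Set (Set Z), IsLMNCover U Set.univ (δ * τ) τ (k + 1)

/-- The linearly controlled dimension of a metric space. -/
def elldim (Z : Type*) [PseudoMetricSpace Z] : ℕ∞ :=
  sInf {n : ℕ∞ | ∃ k : ℕ, n = k ∧ ElldimLE Z k}

/-- `asdim X ≤ m`. -/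
def AsdimLE (X : Type*) [PseudoMetricSpace X] (m : ℕ) : Prop :=
  ∀ d : ℝ, 0 < d → ∃ U : Set (Set X), IsOpenFamily U ∧ IsCoveringOf U Set.univ ∧
    MultiplicityLE U (m + 1) ∧ meshF U < ⊤ ∧ ENNReal.ofReal d ≤ lebesgueF U Set.univ

/-- The asymptotic dimension of a metric space. -/
def asdim (X : Type*) [PseudoMetricSpace X] : ℕ∞ :=
  sInf {n : ℕ∞ | ∃ m : ℕ, n = m ∧ AsdimLE X m}

/-- `ℓ-asdim X ≤ n`. -/
def LasdimLE (X : Type*) [PseudoMetricSpace X] (n : ℕ) : Prop :=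
  ∃ C : ℝ, 1 < C ∧ ∃ d₀ : ℝ, ∀ d : ℝ, d₀ ≤ d →
    ∃ U : Set (Set X), IsLMNCover U Set.univ d (C * d) (n + 1)

/-- The linearly controlled asymptotic dimension of a metric space. -/
def lasdim (X : Type*) [PseudoMetricSpace X] : ℕ∞ :=
  sInf {n : ℕ∞ | ∃ m : ℕ, n = m ∧ LasdimLE X m}

/-- Topological covering dimension `≤ m`: every open covering admits an open refinement of
multiplicity at most `m + 1`. -/
def CovDimLE (Z : Type*) [TopologicalSpace Z] (m : ℕ) : Prop :=
  ∀ U : Set (Set Z), IsOpenFamily U → IsCoveringOf U Set.univ →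
    ∃ V : Set (Set Z), IsOpenFamily V ∧ IsCoveringOf V Set.univ ∧
      (∀ W ∈ V, ∃ W' ∈ U, W ⊆ W') ∧ MultiplicityLE V (m + 1)

/-- Topological covering dimension. -/
def covDim (Z : Type*) [TopologicalSpace Z] : ℕ∞ :=
  sInf {n : ℕ∞ | ∃ m : ℕ, n = m ∧ CovDimLE Z m}

/-! ### Scaled metric spaces and uniform `ℓ-dim` for families -/

/-- `Scaled a X` is the metric space obtained from `X` by multiplying all distances by `a`. -/
def Scaled (a : ℝ≥0) (X : Type*) : Type _ := X

def Scaled.unmk {a : ℝ≥0} {X : Type*} (x : Scaled a X) : X := x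

def Scaled.dist' (a : ℝ≥0) {X : Type*} [PseudoMetricSpace X] (x y : Scaled a X) : ℝ :=
  a * dist x.unmk y.unmk

noncomputable instance Scaled.pseudoMetricSpace (a : ℝ≥0) (X : Type*) [PseudoMetricSpace X] :
    PseudoMetricSpace (Scaled a X) where
  dist := Scaled.dist' a
  dist_self x := by simp [Scaled.dist']
  dist_comm x y := by simp [Scaled.dist', dist_comm]
  dist_triangle x y z := by
    have h := dist_triangle x.unmk y.unmk z.unmk
    have h2 := mul_le_mul_of_nonneg_left h a.coe_nonneg
    simp only [Scaled.dist']
    calc (a : ℝ) * dist x.unmk z.unmk ≤ a * (dist x.unmk y.unmk + dist y.unmk z.unmk) := h2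
      _ = a * dist x.unmk y.unmk + a * dist y.unmk z.unmk := by ring

/-- A family of metric spaces has `ℓ-dim ≤ k` uniformly. -/
def UnifElldimLE {ι : Type*} (Z : ι → Type*) [∀ i, PseudoMetricSpace (Z i)] (k : ℕ) : Prop :=
  ∃ δ : ℝ, δ ∈ Set.Ioo (0:ℝ) 1 ∧ ∃ τ₀ : ℝ, 0 < τ₀ ∧ ∀ τ : ℝ, 0 < τ → τ < τ₀ → ∀ i : ι,
    ∃ U : Set (Set (Z i)), IsLMNCover U Set.univ (δ * τ) τ (k + 1)

/-! ### `mesh^×` and `L^×` for products -/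

/-- `mesh^× U ≤ (p, q)`. -/
def MeshProdLE {X Y : Type*} [PseudoMetricSpace X] [PseudoMetricSpace Y]
    (U : Set (Set (X × Y))) (p q : ℝ) : Prop :=
  ∀ V ∈ U, ∃ x : X, ∃ y : Y, V ⊆ closedBall x p ×ˢ closedBall y q

/-- `L^× U ≥ (p, q)`. -/
def LProdGE {X Y : Type*} [PseudoMetricSpace X] [PseudoMetricSpace Y]
    (U : Set (Set (X × Y))) (p q : ℝ) : Prop :=
  ∀ z : X × Y, ∃ V ∈ U, closedBall z.1 p ×ˢ closedBall z.2 q ⊆ V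

/-- pointed `mesh^× (U, z) ≤ (p, q)`. -/
def MeshProdAtLE {X Y : Type*} [PseudoMetricSpace X] [PseudoMetricSpace Y]
    (U : Set (Set (X × Y))) (z : X × Y) (p q : ℝ) : Prop :=
  ∀ V ∈ U, z ∈ V → ∃ x : X, ∃ y : Y, V ⊆ closedBall x p ×ˢ closedBall y q

/-- pointed `L^× (U, z) ≥ (p, q)`. -/
def LProdAtGE {X Y : Type*} [PseudoMetricSpace X] [PseudoMetricSpace Y]
    (U : Set (Set (X × Y))) (z : X × Y) (p q : ℝ) : Prop :=
  ∃ V ∈ U, closedBall z.1 p ×ˢ closedBall z.2 q ⊆ V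

/-! ### Hyperbolic spaces and their boundaries -/

/-- The Gromov product `(x|y)_o`. -/
def gromov {Z : Type*} [PseudoMetricSpace Z] (o x y : Z) : ℝ :=
  (dist x o + dist y o - dist x y) / 2

/-- `X` is `δ`-hyperbolic. -/
def IsDeltaHyperbolic (X : Type*) [PseudoMetricSpace X] (δ : ℝ) : Prop :=
  0 ≤ δ ∧ ∀ o x y z : X, min (gromov o x z) (gromov o z y) - δ ≤ gromov o x y

/-- `X` is Gromov hyperbolic. -/
def GromovHyperbolic (X : Type*) [PseudoMetricSpace X] : Prop :=
  ∃ δ : ℝ, IsDeltaHyperbolic X δ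

/-- A sequence converges at infinity if `liminf_{i,j → ∞} (x_i | x_j)_o = ∞`. -/
def ConvAtInf {X : Type*} [PseudoMetricSpace X] (o : X) (x : ℕ → X) : Prop :=
  Tendsto (fun p : ℕ × ℕ => gromov o (x p.1) (x p.2)) (atTop ×ˢ atTop) atTop

/-- Sequences converging at infinity. -/
def BdrySeq (X : Type*) [PseudoMetricSpace X] (o : X) := {x : ℕ → X // ConvAtInf o x}

/-- Equivalence of sequences converging at infinity. -/
def bdryRel (X : Type*) [PseudoMetricSpace X] (o : X) (x y : BdrySeq X o) : Prop :=
  Tendsto (fun p : ℕ × ℕ => gromov o (x.1 p.1) (y.1 p.2)) (atTop ×ˢ atTop) atTop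

/-- The boundary at infinity of `X` (with respect to the base point `o`). -/
def Boundary (X : Type*) [PseudoMetricSpace X] (o : X) := Quot (bdryRel X o)

/-- The Gromov product of two boundary points. -/
def bGromov {X : Type*} [PseudoMetricSpace X] (o : X) (ξ η : Boundary X o) : ℝ :=
  sInf {t : ℝ | ∃ x y : BdrySeq X o, Quot.mk (bdryRel X o) x = ξ ∧ Quot.mk (bdryRel X o) y = η ∧
    t = liminf (fun p : ℕ × ℕ => gromov o (x.1 p.1) (y.1 p.2)) (atTop ×ˢ atTop)}

/-- The Gromov product of a point of the space and a boundary point. -/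
def mGromov {X : Type*} [PseudoMetricSpace X] (o : X) (x : X) (ξ : Boundary X o) : ℝ :=
  sInf {t : ℝ | ∃ y : BdrySeq X o, Quot.mk (bdryRel X o) y = ξ ∧
    t = liminf (fun j : ℕ => gromov o x (y.1 j)) atTop}

/-- A hyperbolic space is visual. -/
def IsVisualSpace (X : Type*) [PseudoMetricSpace X] : Prop :=
  ∃ x₀ : X, ∃ D : ℝ, 0 < D ∧ ∀ x : X, ∃ ξ : Boundary X x₀,
    dist x x₀ ≤ mGromov x₀ x ξ + D

/-- `B` is a copy of the boundary at infinity of `X` (realized by the bijection `φ`)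
equipped with a visual metric. -/
def IsVisualBoundary (X : Type*) [PseudoMetricSpace X] (o : X)
    (B : Type*) [PseudoMetricSpace B] (φ : B ≃ Boundary X o) : Prop :=
  ∃ a : ℝ, 1 < a ∧ ∃ c₁ c₂ : ℝ, 0 < c₁ ∧ 0 < c₂ ∧ ∀ ξ ξ' : B,
    c₁ * a ^ (-(bGromov o (φ ξ) (φ ξ'))) ≤ dist ξ ξ' ∧
    dist ξ ξ' ≤ c₂ * a ^ (-(bGromov o (φ ξ) (φ ξ')))

/-- A geodesic from `x` to `y`: an isometric parametrization of `[0, dist x y]`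
sending `0` to `x` and `dist x y` to `y`. -/
def IsGeodesicFrom {Z : Type*} [PseudoMetricSpace Z] (f : ℝ → Z) (x y : Z) : Prop :=
  f 0 = x ∧ f (dist x y) = y ∧ ∀ s ∈ Set.Icc (0:ℝ) (dist x y), ∀ t ∈ Set.Icc (0:ℝ) (dist x y),
    dist (f s) (f t) = |s - t|

/-- A geodesic metric space. -/
def IsGeodesicSpace (X : Type*) [PseudoMetricSpace X] : Prop :=
  ∀ x y : X, ∃ f : ℝ → X, IsGeodesicFrom f x y

/-! ### Word metrics and hyperbolic groups -/

/-- The word length of `g` with respect to the (symmetrized) generating set `S`. -/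
def wordLength {G : Type*} [Group G] (S : Set G) (g : G) : ℕ :=
  sInf {n : ℕ | ∃ w : List G, w.length = n ∧ (∀ s ∈ w, s ∈ S ∨ s⁻¹ ∈ S) ∧ w.prod = g}

/-- The metric on `G` is the word metric of the finite generating set `S`. -/
def IsWordMetric {G : Type*} [Group G] [PseudoMetricSpace G] (S : Set G) : Prop :=
  S.Finite ∧ Subgroup.closure S = ⊤ ∧ ∀ g h : G, dist g h = wordLength S (g⁻¹ * h)

/-! ### Hyperbolic cones -/

/-- The inverse hyperbolic cosine. -/
def arcosh (x : ℝ) : ℝ := Real.log (x + Real.sqrt (x ^ 2 - 1))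

/-- The hyperbolic cone distance between points of `Z × [0, ∞)`, where `Z` is a bounded
metric space of positive diameter:
`cosh d = cosh t · cosh t' − sinh t · sinh t' · cos (μ |z z'|)` with `μ = π / diam Z`. -/
def coneDist {Z : Type*} [PseudoMetricSpace Z] (p q : Z × ℝ≥0) : ℝ :=
  arcosh (Real.cosh p.2 * Real.cosh q.2 -
    Real.sinh p.2 * Real.sinh q.2 *
      Real.cos (Real.pi / Metric.diam (Set.univ : Set Z) * dist p.1 q.1))

/-- `C` is (a realization of) the hyperbolic cone over `Z`: `h` is the canonical projection
of `Z × [0, ∞)` onto `C = Z × [0,∞) / Z × {0}`, and the metric of `C` is the hyperbolic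
cone metric. -/
def IsHypCone (Z : Type*) [PseudoMetricSpace Z] (C : Type*) [PseudoMetricSpace C]
    (h : Z × ℝ≥0 → C) : Prop :=
  Function.Surjective h ∧ ∀ p q : Z × ℝ≥0, dist (h p) (h q) = coneDist p q

/-- A metric space is locally self-similar. -/
def LocallySelfSimilar (Z : Type*) [PseudoMetricSpace Z] : Prop :=
  ∃ lam : ℝ, 1 ≤ lam ∧ ∃ R₀ : ℝ, 1 < R₀ ∧ ∀ R : ℝ, R₀ ≤ R → ∀ A : Set Z,
    Metric.diam A ≤ 1 / R → ∃ f : A → Z, ∀ x y : A,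
      R * dist (x : Z) (y : Z) / lam ≤ dist (f x) (f y) ∧
      dist (f x) (f y) ≤ lam * R * dist (x : Z) (y : Z)

end PaperDefs

open PaperDefs

/-!
Let `L = L(U)` and let `N` be the open `L/2`-neighbourhood of `A`. A member `t` of `V` meeting `N`
has diameter at most `L/2` and a point within `L/2` of some `a ∈ A`, so it lies in the member of
`U` that is deepest at `a`. Assign each such `t` to one member `f t ⊇ t` of `U`, replace every
`s ∈ U` by `(s ∩ N) ∪ ⋃ {t | f t = s}`, and keep the members of `V` that miss `N`. The members
of the new family through a point of `N` come from distinct members of `U` through that point,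
and those through a point outside `N` from distinct members of `V` through it, so the
multiplicity stays at most `m`. Every point of `A` is `L/2`-deep in `N`, which gives the
Lebesgue number on `A`; on `B` it can only grow, since each member of `V` only grew.
-/

namespace PaperDefs

section Multiplicity

variable {Z : Type*} {U W : Set (Set Z)} {m : ℕ}

theorem MultiplicityLE.finite_setOf_mem (hU : MultiplicityLE U m) (z : Z) :
    {s ∈ U | z ∈ s}.Finite := by
  by_contra hinf
  obtain ⟨t, hts, htcard⟩ := Set.Infinite.exists_subset_card_eq hinf (m + 1)
  have := hU t (fun s hs => (hts hs).1) ⟨z, fun s hs => (hts hs).2⟩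
  omega

theorem multiplicityLE_of_forall_subset_image
    (h : ∀ z, ∃ U : Set (Set Z), MultiplicityLE U m ∧
      ∃ φ : Set Z → Set Z, {s ∈ W | z ∈ s} ⊆ φ '' {s ∈ U | z ∈ s}) :
    MultiplicityLE W m := by
  classical
  rintro s hsW ⟨z, hz⟩
  obtain ⟨U, hU, φ, hφ⟩ := h z
  obtain ⟨s', hs'U, rfl⟩ := Finset.subset_set_image_iff.1 fun w hw => hφ ⟨hsW hw, hz w hw⟩
  exact Finset.card_image_le.trans (hU s' (fun u hu => (hs'U hu).1) ⟨z, fun u hu => (hs'U hu).2⟩)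

end Multiplicity

section Lebesgue

variable {Z : Type*} [PseudoMetricSpace Z] {A : Set Z} {U V : Set (Set Z)} {m : ℕ}

def lebesgueAt (U : Set (Set Z)) (z : Z) : ℝ≥0∞ :=
  ⨆ s ∈ U, infEDist z sᶜ

theorem le_lebesgueF {r : ℝ≥0∞} (h : ∀ z ∈ A, r ≤ lebesgueAt U z) : r ≤ lebesgueF U A :=
  le_iInf₂ h

theorem lebesgueF_le_lebesgueAt {z : Z} (hz : z ∈ A) : lebesgueF U A ≤ lebesgueAt U z :=
  iInf₂_le z hz

theorem infEDist_compl_le_lebesgueAt {s : Set Z} (hs : s ∈ U) (z : Z) :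
    infEDist z sᶜ ≤ lebesgueAt U z :=
  le_iSup₂ (f := fun s (_ : s ∈ U) => infEDist z sᶜ) s hs

theorem lebesgueAt_mono {W : Set (Set Z)} (h : ∀ s ∈ V, ∃ t ∈ W, s ⊆ t) (z : Z) :
    lebesgueAt V z ≤ lebesgueAt W z :=
  iSup₂_le fun s hs => by
    obtain ⟨t, ht, hst⟩ := h s hs
    exact (infEDist_anti (compl_subset_compl.2 hst)).trans (infEDist_compl_le_lebesgueAt ht z)

theorem ediam_le_meshF {s : Set Z} (hs : s ∈ U) : ediam s ≤ meshF U :=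
  le_iSup₂ (f := fun s (_ : s ∈ U) => ediam s) s hs

/-- Only finitely many members contain `z`, so the supremum is attained. -/
theorem MultiplicityLE.exists_lebesgueAt_le (hU : MultiplicityLE U m) {z : Z}
    (hz : z ∈ ⋃₀ U) : ∃ s ∈ U, lebesgueAt U z ≤ infEDist z sᶜ := by
  obtain ⟨s, ⟨hs, -⟩, hmax⟩ :=
    Set.exists_max_image _ (fun s => infEDist z sᶜ) (hU.finite_setOf_mem z) hz
  refine ⟨s, hs, iSup₂_le fun s' hs' => ?_⟩
  by_cases hzs' : z ∈ s'
  · exact hmax s' ⟨hs', hzs'⟩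
  · simp [infEDist_zero_of_mem (mem_compl hzs')]

/-- `t` lies in the member of `U` that is deepest at a point of `A` close to `v`. -/
theorem MultiplicityLE.exists_superset_of_ediam_le (hU : MultiplicityLE U m)
    (hUcov : IsCoveringOf U A) {t : Set Z} (hdiam : ediam t ≤ lebesgueF U A / 2) {v : Z}
    (hvt : v ∈ t) (hvA : infEDist v A < lebesgueF U A / 2) : ∃ s ∈ U, t ⊆ s := by
  obtain ⟨a, ha, hva⟩ := infEDist_lt_iff.1 hvA
  obtain ⟨s, hs, hdeep⟩ := hU.exists_lebesgueAt_le (hUcov ha)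
  refine ⟨s, hs, fun w hwt => by_contra fun hws => ?_⟩
  have hwa : edist a w < lebesgueF U A :=
    calc edist a w ≤ edist a v + edist v w := edist_triangle _ _ _
      _ < lebesgueF U A / 2 + lebesgueF U A / 2 :=
        ENNReal.add_lt_add_of_lt_of_le (edist_ne_top v w) (by rwa [edist_comm])
          ((edist_le_ediam_of_mem hvt hwt).trans hdiam)
      _ = lebesgueF U A := ENNReal.add_halves _
  exact (infEDist_le_edist_of_mem hws).not_gt
    (hwa.trans_le ((lebesgueF_le_lebesgueAt ha).trans hdeep))

theorem subset_of_ediam_eq_zero {s t : Set Z} (hs : ediam s = 0) (ht : IsOpen t)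
    (hst : (s ∩ t).Nonempty) : s ⊆ t := by
  obtain ⟨v, hvs, hvt⟩ := hst
  obtain ⟨ε, hε, hball⟩ := EMetric.isOpen_iff.1 ht v hvt
  exact fun w hws => hball (mem_eball.2 ((edist_le_ediam_of_mem hws hvs).trans_lt (hs ▸ hε)))

/-- When `L(U) = 0` the `L(U)/2`-neighbourhood of `A` is empty, but then `V` has mesh `0` and
`N = ⋃₀ U` does the job. -/
theorem exists_absorbing_nhds (hUopen : IsOpenFamily U) (hUcov : IsCoveringOf U A)
    (hUm : MultiplicityLE U m) (hmesh : meshF V ≤ lebesgueF U A / 2) :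
    ∃ N : Set Z, IsOpen N ∧ A ⊆ N ∧ (∀ t ∈ V, (t ∩ N).Nonempty → ∃ s ∈ U, t ⊆ s) ∧
      ∀ z ∈ A, lebesgueF U A / 2 ≤ infEDist z Nᶜ := by
  rcases eq_or_ne (lebesgueF U A) 0 with hL | hL
  · refine ⟨⋃₀ U, isOpen_sUnion hUopen, hUcov, ?_, by simp [hL]⟩
    rintro t ht ⟨v, hvt, s, hs, hvs⟩
    have hdiam : ediam t = 0 := le_antisymm (by simpa [hL] using (ediam_le_meshF ht).trans hmesh)
      zero_le
    exact ⟨s, hs, subset_of_ediam_eq_zero hdiam (hUopen s hs) ⟨v, hvt, hvs⟩⟩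
  · refine ⟨{z | infEDist z A < lebesgueF U A / 2},
      isOpen_lt continuous_infEDist continuous_const, fun a ha => ?_, ?_, fun a ha => ?_⟩
    · simpa [infEDist_zero_of_mem ha] using hL
    · rintro t ht ⟨v, hvt, hvN⟩
      exact hUm.exists_superset_of_ediam_le hUcov ((ediam_le_meshF ht).trans hmesh) hvt hvN
    · refine le_infEDist.2 fun w hw => ?_
      simpa [edist_comm] using
        (not_lt.1 (notMem_ofPred_iff.1 hw)).trans (infEDist_le_edist_of_mem ha)

end Lebesgue

section UnionCover

variable {Z : Type*}

def absorb (V : Set (Set Z)) (N : Set Z) (f : Set Z → Set Z) (s : Set Z) : Set Z :=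
  (s ∩ N) ∪ ⋃₀ {t ∈ V | (t ∩ N).Nonempty ∧ f t = s}

open Classical in
def absorbOrSelf (V : Set (Set Z)) (N : Set Z) (f : Set Z → Set Z) (t : Set Z) : Set Z :=
  if (t ∩ N).Nonempty then absorb V N f (f t) else t

def unionCover (V : Set (Set Z)) (N : Set Z) (f : Set Z → Set Z) (U : Set (Set Z)) :
    Set (Set Z) :=
  absorb V N f '' U ∪ absorbOrSelf V N f '' V

variable {A B N : Set Z} {U V : Set (Set Z)} {f : Set Z → Set Z} {m : ℕ}

theorem absorb_subset (hsub : ∀ t ∈ V, (t ∩ N).Nonempty → t ⊆ f t) (s : Set Z) :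
    absorb V N f s ⊆ s := by
  rintro z (⟨hzs, -⟩ | ⟨t, ⟨ht, htN, rfl⟩, hzt⟩)
  · exact hzs
  · exact hsub t ht htN hzt

theorem inter_subset_absorb (s : Set Z) : s ∩ N ⊆ absorb V N f s :=
  subset_union_left

theorem absorbOrSelf_of_nonempty {t : Set Z} (htN : (t ∩ N).Nonempty) :
    absorbOrSelf V N f t = absorb V N f (f t) := by
  simp [absorbOrSelf, htN]

theorem absorbOrSelf_of_not_nonempty {t : Set Z} (htN : ¬(t ∩ N).Nonempty) :
    absorbOrSelf V N f t = t := by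
  simp [absorbOrSelf, htN]

theorem subset_absorbOrSelf {t : Set Z} (ht : t ∈ V) : t ⊆ absorbOrSelf V N f t := by
  by_cases htN : (t ∩ N).Nonempty
  · rw [absorbOrSelf_of_nonempty htN]
    exact fun z hz => Or.inr ⟨t, ⟨ht, htN, rfl⟩, hz⟩
  · rw [absorbOrSelf_of_not_nonempty htN]

theorem exists_absorbOrSelf_eq_absorb {s : Set Z} {z : Z} (hz : z ∈ absorb V N f s)
    (hzN : z ∉ N) : ∃ t ∈ V, z ∈ t ∧ absorbOrSelf V N f t = absorb V N f s := by
  rcases hz with ⟨-, hzN'⟩ | ⟨t, ⟨ht, htN, rfl⟩, hzt⟩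
  · exact absurd hzN' hzN
  · exact ⟨t, ht, hzt, absorbOrSelf_of_nonempty htN⟩

theorem isOpenFamily_unionCover [TopologicalSpace Z] (hU : IsOpenFamily U)
    (hV : IsOpenFamily V) (hN : IsOpen N) (hfU : ∀ t ∈ V, (t ∩ N).Nonempty → f t ∈ U) :
    IsOpenFamily (unionCover V N f U) := by
  have habsorb : ∀ s ∈ U, IsOpen (absorb V N f s) := fun s hs =>
    ((hU s hs).inter hN).union (isOpen_sUnion fun t ht => hV t ht.1)
  rintro _ (⟨s, hs, rfl⟩ | ⟨t, ht, rfl⟩)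
  · exact habsorb s hs
  · by_cases htN : (t ∩ N).Nonempty
    · rw [absorbOrSelf_of_nonempty htN]
      exact habsorb _ (hfU t ht htN)
    · rw [absorbOrSelf_of_not_nonempty htN]
      exact hV t ht

theorem isCoveringOf_unionCover (hAN : A ⊆ N) (hU : IsCoveringOf U A) (hV : IsCoveringOf V B) :
    IsCoveringOf (unionCover V N f U) (A ∪ B) := by
  rintro z (hz | hz)
  · obtain ⟨s, hs, hzs⟩ := hU hz
    exact ⟨_, Or.inl (mem_image_of_mem _ hs), inter_subset_absorb s ⟨hzs, hAN hz⟩⟩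
  · obtain ⟨t, ht, hzt⟩ := hV hz
    exact ⟨_, Or.inr (mem_image_of_mem _ ht), subset_absorbOrSelf ht hzt⟩

theorem multiplicityLE_unionCover (hfU : ∀ t ∈ V, (t ∩ N).Nonempty → f t ∈ U)
    (hsub : ∀ t ∈ V, (t ∩ N).Nonempty → t ⊆ f t) (hUm : MultiplicityLE U m)
    (hVm : MultiplicityLE V m) : MultiplicityLE (unionCover V N f U) m := by
  refine multiplicityLE_of_forall_subset_image fun z => ?_
  by_cases hzN : z ∈ N
  · refine ⟨U, hUm, absorb V N f, ?_⟩
    rintro _ ⟨⟨s, hs, rfl⟩ | ⟨t, ht, rfl⟩, hz⟩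
    · exact ⟨s, ⟨hs, absorb_subset hsub s hz⟩, rfl⟩
    · by_cases htN : (t ∩ N).Nonempty
      · rw [absorbOrSelf_of_nonempty htN] at hz ⊢
        exact ⟨f t, ⟨hfU t ht htN, absorb_subset hsub _ hz⟩, rfl⟩
      · rw [absorbOrSelf_of_not_nonempty htN] at hz
        exact absurd ⟨z, hz, hzN⟩ htN
  · refine ⟨V, hVm, absorbOrSelf V N f, ?_⟩
    rintro _ ⟨⟨s, hs, rfl⟩ | ⟨t, ht, rfl⟩, hz⟩
    · obtain ⟨t, ht, hzt, heq⟩ := exists_absorbOrSelf_eq_absorb hz hzN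
      exact ⟨t, ⟨ht, hzt⟩, heq⟩
    · by_cases htN : (t ∩ N).Nonempty
      · rw [absorbOrSelf_of_nonempty htN] at hz ⊢
        obtain ⟨t', ht', hzt', heq⟩ := exists_absorbOrSelf_eq_absorb hz hzN
        exact ⟨t', ⟨ht', hzt'⟩, heq⟩
      · rw [absorbOrSelf_of_not_nonempty htN] at hz
        exact ⟨t, ⟨ht, hz⟩, rfl⟩

variable [PseudoMetricSpace Z]

theorem meshF_unionCover_le (hfU : ∀ t ∈ V, (t ∩ N).Nonempty → f t ∈ U)
    (hsub : ∀ t ∈ V, (t ∩ N).Nonempty → t ⊆ f t) :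
    meshF (unionCover V N f U) ≤ max (meshF V) (meshF U) := by
  have habsorb : ∀ s ∈ U, ediam (absorb V N f s) ≤ meshF U := fun s hs =>
    (ediam_mono (absorb_subset hsub s)).trans (ediam_le_meshF hs)
  refine iSup₂_le ?_
  rintro _ (⟨s, hs, rfl⟩ | ⟨t, ht, rfl⟩)
  · exact le_max_of_le_right (habsorb s hs)
  · by_cases htN : (t ∩ N).Nonempty
    · rw [absorbOrSelf_of_nonempty htN]
      exact le_max_of_le_right (habsorb _ (hfU t ht htN))
    · rw [absorbOrSelf_of_not_nonempty htN]
      exact le_max_of_le_left (ediam_le_meshF ht)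

theorem le_lebesgueF_unionCover {r : ℝ≥0∞} (hrU : r ≤ lebesgueF U A)
    (hrN : ∀ z ∈ A, r ≤ infEDist z Nᶜ) :
    min r (lebesgueF V B) ≤ lebesgueF (unionCover V N f U) (A ∪ B) := by
  refine le_lebesgueF fun z hz => ?_
  rcases hz with hzA | hzB
  · calc min r (lebesgueF V B) ≤ min (lebesgueAt U z) (infEDist z Nᶜ) :=
          (min_le_left _ _).trans (le_min (hrU.trans (lebesgueF_le_lebesgueAt hzA)) (hrN z hzA))
      _ = ⨆ s ∈ U, infEDist z (s ∩ N)ᶜ := by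
          simp only [lebesgueAt, iSup₂_inf_eq, compl_inter, infEDist_union]
      _ ≤ lebesgueAt (unionCover V N f U) z := iSup₂_le fun s hs =>
          (infEDist_anti (compl_subset_compl.2 (inter_subset_absorb s))).trans
            (infEDist_compl_le_lebesgueAt (Or.inl (mem_image_of_mem _ hs)) z)
  · exact (min_le_right _ _).trans ((lebesgueF_le_lebesgueAt hzB).trans (lebesgueAt_mono
      (fun t ht => ⟨_, Or.inr (mem_image_of_mem _ ht), subset_absorbOrSelf ht⟩) z))

end UnionCover

end PaperDefs

/-- **Lemma (union).** Given open coverings `U` of `A` and `V` of `B`, both of multiplicity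
at most `m`, with `mesh V ≤ L(U)/2`, there is an open covering `W` of `A ∪ B` of multiplicity
at most `m` with `mesh W ≤ max (mesh V) (mesh U)` and `L(W) ≥ min (L(U)/2) (L(V))`. -/
theorem union_covering
    {Z : Type*} [MetricSpace Z] (A B : Set Z) (m : ℕ) (U V : Set (Set Z))
    (hUopen : IsOpenFamily U) (hUcov : IsCoveringOf U A)
    (hVopen : IsOpenFamily V) (hVcov : IsCoveringOf V B)
    (hUm : MultiplicityLE U m) (hVm : MultiplicityLE V m)
    (hmesh : meshF V ≤ lebesgueF U A / 2) :
    ∃ W : Set (Set Z), IsOpenFamily W ∧ IsCoveringOf W (A ∪ B) ∧ MultiplicityLE W m ∧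
      meshF W ≤ max (meshF V) (meshF U) ∧
      min (lebesgueF U A / 2) (lebesgueF V B) ≤ lebesgueF W (A ∪ B) := by
  obtain ⟨N, hNopen, hAN, hNV, hLN⟩ := exists_absorbing_nhds hUopen hUcov hUm hmesh
  choose! f hfU hsub using hNV
  exact ⟨unionCover V N f U, isOpenFamily_unionCover hUopen hVopen hNopen hfU,
    isCoveringOf_unionCover hAN hUcov hVcov, multiplicityLE_unionCover hfU hsub hUm hVm,
    meshF_unionCover_le hfU hsub, le_lebesgueF_unionCover ENNReal.half_le_self hLN⟩
end
end

section
/- Let X be a metric space and assume ℓ-dim(X × [0,1]) ≤ k, where X × [0,1] carries the l∞ metric. Then there exist τ₀ > 0 and σ > 1 so that for every 0 < τ < τ₀ and every τ′ > 0 there exists a (k+1)-colored open covering 𝒰 of X × ℝ with mesh^×(𝒰) ≤ (στ, στ′) and L^×(𝒰) ≥ (τ, τ′). -/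
open Metric Set Filter ENNReal NNReal

noncomputable section

open PaperDefs

/-!
Fold the `ℝ`-coordinate onto `[0, 1]` by `(x, t) ↦ (x, zigzag (t / L))`, where `L = τ' / τ` and
`zigzag` is the distance to `2ℤ`, a triangle wave of slope `±1`. Pulling back a
`(2τ, s)`-covering of `X × [0, 1]`, `s = 2τ/δ`, gives the right Lebesgue numbers and mesh `s` in
the `X`-direction, but a preimage wraps around infinitely often in the `ℝ`-direction. Cutting
each preimage along the connected components of its projection to `ℝ` repairs this without
new colors: a component longer than `2Ls` contains an interval on which the zigzag oscillates
by more than `s`, which a set of diameter `s` cannot accommodate.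
-/

def zigzag (t : ℝ) : ℝ := infDist t (range fun n : ℤ => 2 * (n : ℝ))

lemma zigzag_nonneg (t : ℝ) : 0 ≤ zigzag t := infDist_nonneg

lemma lipschitzWith_zigzag : LipschitzWith 1 zigzag := lipschitz_infDist_pt _

lemma zigzag_eq_min {j : ℤ} {t : ℝ} (h₁ : 2 * j ≤ t) (h₂ : t ≤ 2 * j + 2) :
    zigzag t = min (t - 2 * j) (2 * j + 2 - t) := by
  apply le_antisymm
  · refine le_min ?_ ?_
    · have := infDist_le_dist_of_mem (x := t) (mem_range_self (f := fun n : ℤ => 2 * (n : ℝ)) j)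
      rwa [Real.dist_eq, abs_of_nonneg (by linarith)] at this
    · have := infDist_le_dist_of_mem (x := t)
        (mem_range_self (f := fun n : ℤ => 2 * (n : ℝ)) (j + 1))
      push_cast at this
      rwa [Real.dist_eq, abs_of_nonpos (by linarith), neg_sub, mul_add, mul_one] at this
  · rw [zigzag, le_infDist (range_nonempty _)]
    rintro _ ⟨n, rfl⟩
    rw [Real.dist_eq]
    rcases le_or_gt n j with hn | hn
    · have : (n : ℝ) ≤ j := by exact_mod_cast hn
      exact (min_le_left _ _).trans ((by linarith : t - 2 * j ≤ t - 2 * n).trans (le_abs_self _))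
    · have : (j : ℝ) + 1 ≤ n := by exact_mod_cast hn
      exact (min_le_right _ _).trans ((by linarith : 2 * j + 2 - t ≤ -(t - 2 * n)).trans
        (neg_le_abs _))

lemma zigzag_le_one (t : ℝ) : zigzag t ≤ 1 := by
  have h₁ := Int.floor_le (t / 2)
  have h₂ := Int.lt_floor_add_one (t / 2)
  rw [zigzag_eq_min (j := ⌊t / 2⌋) (by linarith) (by linarith)]
  have := min_le_left (t - 2 * ⌊t / 2⌋) (2 * ⌊t / 2⌋ + 2 - t)
  have := min_le_right (t - 2 * ⌊t / 2⌋) (2 * ⌊t / 2⌋ + 2 - t)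
  linarith

lemma abs_zigzag_sub_zigzag (m : ℤ) {u v : ℝ} (hu : u ∈ Icc (m : ℝ) (m + 1))
    (hv : v ∈ Icc (m : ℝ) (m + 1)) : |zigzag u - zigzag v| = |u - v| := by
  obtain ⟨j, rfl | rfl⟩ := Int.even_or_odd' m
  · push_cast at hu hv
    rw [zigzag_eq_min (j := j) hu.1 (by linarith [hu.2]), min_eq_left (by linarith [hu.2]),
      zigzag_eq_min (j := j) hv.1 (by linarith [hv.2]), min_eq_left (by linarith [hv.2])]
    ring_nf
  · push_cast at hu hv
    rw [zigzag_eq_min (j := j) (by linarith [hu.1]) (by linarith [hu.2]),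
      min_eq_right (by linarith [hu.1]), zigzag_eq_min (j := j) (by linarith [hv.1])
      (by linarith [hv.2]), min_eq_right (by linarith [hv.1]), abs_sub_comm u]
    ring_nf

lemma exists_le_abs_zigzag_sub {a b : ℝ} (hab : a ≤ b) :
    ∃ u ∈ Icc a b, ∃ v ∈ Icc a b, min ((b - a) / 2) 1 ≤ |zigzag u - zigzag v| := by
  -- Either `[a, b]` contains a whole piece `[q, q + 1]` of monotonicity, or it meets only the
  -- pieces on either side of `q`, and the longer of its two parts has length `≥ (b - a) / 2`.
  set q : ℤ := ⌈a⌉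
  have hq₁ : a ≤ q := Int.le_ceil a
  have hq₂ : (q : ℝ) < a + 1 := Int.ceil_lt_add_one a
  have hprev : a ∈ Icc ((q - 1 : ℤ) : ℝ) ((q - 1 : ℤ) + 1) := by push_cast; constructor <;> linarith
  rcases le_or_gt ((q : ℝ) + 1) b with hb | hb
  · refine ⟨q, ⟨hq₁, by linarith⟩, q + 1, ⟨by linarith, hb⟩, ?_⟩
    rw [abs_zigzag_sub_zigzag q (by simp) (by simp)]
    simp
  rcases le_or_gt (q : ℝ) b with hqb | hqb
  · rcases le_total ((b - a) / 2) (q - a) with h | h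
    · refine ⟨a, ⟨le_rfl, hab⟩, q, ⟨hq₁, hqb⟩, ?_⟩
      rw [abs_zigzag_sub_zigzag (q - 1) hprev (by push_cast; constructor <;> linarith),
        abs_sub_comm, abs_of_nonneg (by linarith)]
      exact (min_le_left _ _).trans h
    · refine ⟨q, ⟨hq₁, hqb⟩, b, ⟨hab, le_rfl⟩, ?_⟩
      rw [abs_zigzag_sub_zigzag q (by simp) (by constructor <;> linarith),
        abs_sub_comm, abs_of_nonneg (by linarith)]
      exact (min_le_left _ _).trans (by linarith)
  · refine ⟨a, ⟨le_rfl, hab⟩, b, ⟨hab, le_rfl⟩, ?_⟩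
    rw [abs_zigzag_sub_zigzag (q - 1) hprev (by push_cast; constructor <;> linarith),
      abs_sub_comm, abs_of_nonneg (by linarith)]
    exact (min_le_left _ _).trans (by linarith)

lemma IsPreconnected.abs_sub_le_of_abs_zigzag_sub_le {K : Set ℝ} (hK : IsPreconnected K)
    {L s : ℝ} (hL : 0 < L) (hs : s < 1)
    (h : ∀ u ∈ K, ∀ v ∈ K, |zigzag (u / L) - zigzag (v / L)| ≤ s) {u v : ℝ} (hu : u ∈ K)
    (hv : v ∈ K) : |u - v| ≤ 2 * L * s := by
  wlog huv : u ≤ v generalizing u v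
  · rw [abs_sub_comm]; exact this hv hu (le_of_not_ge huv)
  by_contra! hlong
  rw [abs_sub_comm, abs_of_nonneg (sub_nonneg.2 huv)] at hlong
  obtain ⟨w₁, hw₁, w₂, hw₂, hosc⟩ :=
    exists_le_abs_zigzag_sub (div_le_div_of_nonneg_right huv hL.le)
  have hmem : ∀ w ∈ Icc (u / L) (v / L), L * w ∈ K := fun w hw =>
    hK.ordConnected.out hu hv
      ⟨(div_le_iff₀' hL).1 hw.1, (le_div_iff₀' hL).1 hw.2⟩
  have hbound := h _ (hmem w₁ hw₁) _ (hmem w₂ hw₂)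
  rw [mul_div_cancel_left₀ _ hL.ne', mul_div_cancel_left₀ _ hL.ne'] at hbound
  have : s < (v / L - u / L) / 2 := by
    rw [div_sub_div_same, lt_div_iff₀ two_pos, lt_div_iff₀ hL]; linarith
  exact absurd (lt_min this hs) (not_lt.2 (hosc.trans hbound))

lemma exists_subset_closedBall_of_forall_abs_sub_le {S : Set ℝ} {r : ℝ} (hS : S.Nonempty)
    (h : ∀ u ∈ S, ∀ v ∈ S, |u - v| ≤ 2 * r) : ∃ c, S ⊆ closedBall c r := by
  have hb : Bornology.IsBounded S := isBounded_iff.2 ⟨2 * r, fun u hu v hv => h u hu v hv⟩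
  have hr : 0 ≤ 2 * r := (abs_nonneg _).trans (h _ hS.some_mem _ hS.some_mem)
  have hdiam : sSup S - sInf S ≤ 2 * r :=
    Real.diam_eq hb ▸ diam_le_of_forall_dist_le hr fun u hu v hv => h u hu v hv
  refine ⟨(sInf S + sSup S) / 2, fun t ht => ?_⟩
  have h₁ := csInf_le hb.bddBelow ht
  have h₂ := le_csSup hb.bddAbove ht
  rw [Real.closedBall_eq_Icc]
  constructor <;> linarith

section ComponentSlices

variable {A Y : Type*} [TopologicalSpace Y] {π : A → Y} {W S : Set A}

def componentSlices (π : A → Y) (W : Set A) : Set (Set A) :=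
  (fun y => W ∩ π ⁻¹' connectedComponentIn (π '' W) y) '' (π '' W)

lemma subset_of_mem_componentSlices (hS : S ∈ componentSlices π W) : S ⊆ W := by
  obtain ⟨y, -, rfl⟩ := hS
  exact inter_subset_left

lemma pairwise_disjoint_componentSlices (π : A → Y) (W : Set A) :
    (componentSlices π W).Pairwise Disjoint := by
  rintro _ ⟨y₁, -, rfl⟩ _ ⟨y₂, -, rfl⟩ hne
  refine (Set.disjoint_left.2 fun y hy₁ hy₂ => hne ?_).preimage π |>.mono inter_subset_right
    inter_subset_right
  dsimp only
  rw [connectedComponentIn_eq hy₁, connectedComponentIn_eq hy₂]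

lemma exists_mem_componentSlices_superset {B : Set A} (hBW : B ⊆ W) (hne : B.Nonempty)
    (hB : IsPreconnected (π '' B)) : ∃ S ∈ componentSlices π W, B ⊆ S := by
  obtain ⟨a, ha⟩ := hne
  refine ⟨_, mem_image_of_mem _ (mem_image_of_mem π (hBW ha)), fun b hb => ⟨hBW hb, ?_⟩⟩
  exact hB.subset_connectedComponentIn (mem_image_of_mem π ha) (image_mono hBW)
    (mem_image_of_mem π hb)

lemma isOpen_of_mem_componentSlices [TopologicalSpace A] [LocallyConnectedSpace Y]
    (hπ : Continuous π) (hπo : IsOpenMap π) (hW : IsOpen W) (hS : S ∈ componentSlices π W) :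
    IsOpen S := by
  obtain ⟨y, -, rfl⟩ := hS
  exact hW.inter ((hπo W hW).connectedComponentIn.preimage hπ)

end ComponentSlices

namespace PaperDefs

variable {Z A : Type*}

lemma IsColored.mono {U : Set (Set Z)} {a b : ℕ} (h : IsColored U a) (hab : a ≤ b) :
    IsColored U b := by
  obtain ⟨F, rfl, hF⟩ := h
  refine ⟨fun i => if hi : (i : ℕ) < a then F ⟨i, hi⟩ else ∅, ?_, fun i => ?_⟩
  · ext V
    simp only [mem_iUnion]
    constructor
    · rintro ⟨i, hi⟩
      exact ⟨Fin.castLE hab i, by simpa [i.isLt] using hi⟩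
    · rintro ⟨i, hi⟩
      split_ifs at hi
      exacts [⟨_, hi⟩, hi.elim]
  · dsimp only
    split_ifs
    exacts [hF _, pairwise_empty _]

lemma IsColored.biUnion_of_subset_preimage {U : Set (Set Z)} {n : ℕ} (hU : IsColored U n)
    (f : A → Z) {S : Set Z → Set (Set A)} (hS : ∀ V, (S V).Pairwise Disjoint)
    (hSf : ∀ V, ∀ W ∈ S V, W ⊆ f ⁻¹' V) : IsColored (⋃ V ∈ U, S V) n := by
  obtain ⟨F, rfl, hF⟩ := hU
  refine ⟨fun i => ⋃ V ∈ F i, S V, biUnion_iUnion _ _, fun i => ?_⟩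
  rintro W₁ hW₁ W₂ hW₂ hne
  obtain ⟨V₁, hV₁, hW₁⟩ := mem_iUnion₂.1 hW₁
  obtain ⟨V₂, hV₂, hW₂⟩ := mem_iUnion₂.1 hW₂
  by_cases hV : V₁ = V₂
  · subst hV
    exact hS V₁ hW₁ hW₂ hne
  · exact ((hF i hV₁ hV₂ hV).preimage f).mono (hSf _ _ hW₁) (hSf _ _ hW₂)

variable [PseudoMetricSpace Z] {U : Set (Set Z)}

lemma dist_le_of_meshF_le {s : ℝ} (hs : 0 ≤ s) (h : meshF U ≤ ENNReal.ofReal s) {V : Set Z}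
    (hV : V ∈ U) {p q : Z} (hp : p ∈ V) (hq : q ∈ V) : dist p q ≤ s := by
  have := (edist_le_ediam_of_mem hp hq).trans ((le_iSup₂ (f := fun V _ => ediam V) V hV).trans h)
  rwa [edist_dist, ENNReal.ofReal_le_ofReal_iff hs] at this

lemma exists_closedBall_subset_of_le_lebesgueF {l ρ : ℝ} (hρ : 0 ≤ ρ) (hρl : ρ < l)
    (h : ENNReal.ofReal l ≤ lebesgueF U univ) (z : Z) : ∃ V ∈ U, closedBall z ρ ⊆ V := by
  have hlt : ENNReal.ofReal ρ < ⨆ V ∈ U, infEDist z Vᶜ :=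
    ((ENNReal.ofReal_lt_ofReal_iff (hρ.trans_lt hρl)).2 hρl).trans_le
      (h.trans (iInf₂_le z (mem_univ z)))
  obtain ⟨V, hlt⟩ := lt_iSup_iff.1 hlt
  obtain ⟨hV, hlt⟩ := lt_iSup_iff.1 hlt
  refine ⟨V, hV, fun y hy => not_not.1 fun hyV => ?_⟩
  have hle : edist z y ≤ ENNReal.ofReal ρ := by
    rw [edist_dist]; exact ENNReal.ofReal_le_ofReal (mem_closedBall'.1 hy)
  exact (infEDist_le_edist_of_mem (mem_compl hyV)).trans hle |>.not_gt hlt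

lemma exists_elldimLE_of_elldim_le {Z : Type*} [PseudoMetricSpace Z] {k : ℕ}
    (h : elldim Z ≤ k) : ∃ m ≤ k, ElldimLE Z m := by
  have hne : {n : ℕ∞ | ∃ m : ℕ, n = m ∧ ElldimLE Z m}.Nonempty := by
    by_contra hempty
    rw [not_nonempty_iff_eq_empty] at hempty
    rw [elldim, hempty] at h
    simp at h
  obtain ⟨m, hm, hZ⟩ := csInf_mem hne
  rw [elldim, hm] at h
  exact ⟨m, by exact_mod_cast h, hZ⟩

end PaperDefs

section ZigzagSlices

variable {X : Type*} {L : ℝ} {U₀ : Set (Set (X × Icc (0 : ℝ) 1))}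

def zigzagMap (L : ℝ) (p : X × ℝ) : X × Icc (0 : ℝ) 1 :=
  (p.1, ⟨zigzag (p.2 / L), zigzag_nonneg _, zigzag_le_one _⟩)

lemma continuous_zigzagMap [TopologicalSpace X] (L : ℝ) : Continuous (zigzagMap (X := X) L) :=
  continuous_fst.prodMk <| (lipschitzWith_zigzag.continuous.comp
    (continuous_snd.div_const L)).subtype_mk _

lemma dist_zigzagMap [PseudoMetricSpace X] (L : ℝ) (p q : X × ℝ) :
    dist (zigzagMap L p) (zigzagMap L q) =
      max (dist p.1 q.1) |zigzag (p.2 / L) - zigzag (q.2 / L)| := by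
  rw [Prod.dist_eq, Subtype.dist_eq, Real.dist_eq]
  rfl

lemma dist_zigzagMap_le [PseudoMetricSpace X] (hL : 0 < L) (p q : X × ℝ) :
    dist (zigzagMap L p) (zigzagMap L q) ≤ max (dist p.1 q.1) (dist p.2 q.2 / L) := by
  rw [dist_zigzagMap]
  refine max_le_max le_rfl ?_
  calc |zigzag (p.2 / L) - zigzag (q.2 / L)| ≤ dist (p.2 / L) (q.2 / L) := by
        simpa [Real.dist_eq] using lipschitzWith_zigzag.dist_le_mul (p.2 / L) (q.2 / L)
    _ = dist p.2 q.2 / L := by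
        rw [Real.dist_eq, Real.dist_eq, div_sub_div_same, abs_div, abs_of_pos hL]

def zigzagSlices (L : ℝ) (U₀ : Set (Set (X × Icc (0 : ℝ) 1))) : Set (Set (X × ℝ)) :=
  ⋃ V ∈ U₀, componentSlices Prod.snd (zigzagMap L ⁻¹' V)

lemma isOpenFamily_zigzagSlices [TopologicalSpace X] (h : IsOpenFamily U₀) :
    IsOpenFamily (zigzagSlices L U₀) := by
  intro S hS
  obtain ⟨V, hV, hS⟩ := mem_iUnion₂.1 hS
  exact isOpen_of_mem_componentSlices continuous_snd isOpenMap_snd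
    ((h V hV).preimage (continuous_zigzagMap L)) hS

lemma isCoveringOf_zigzagSlices (h : IsCoveringOf U₀ univ) :
    IsCoveringOf (zigzagSlices L U₀) univ := by
  intro z _
  obtain ⟨V, hV, hzV⟩ := h (mem_univ (zigzagMap L z))
  obtain ⟨S, hS, hzS⟩ := exists_mem_componentSlices_superset (π := Prod.snd)
    (singleton_subset_iff.2 (show z ∈ zigzagMap L ⁻¹' V from hzV)) (singleton_nonempty z)
    (by rw [image_singleton]; exact isPreconnected_singleton)
  exact ⟨S, mem_iUnion₂.2 ⟨V, hV, hS⟩, hzS rfl⟩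

lemma isColored_zigzagSlices {n : ℕ} (h : IsColored U₀ n) : IsColored (zigzagSlices L U₀) n :=
  h.biUnion_of_subset_preimage (zigzagMap L) (fun _ => pairwise_disjoint_componentSlices _ _)
    fun _ _ => subset_of_mem_componentSlices

lemma meshProdLE_zigzagSlices [PseudoMetricSpace X] {s : ℝ} (hL : 0 < L) (hs : s < 1)
    (h : ∀ V ∈ U₀, ∀ p ∈ V, ∀ q ∈ V, dist p q ≤ s) :
    MeshProdLE (zigzagSlices L U₀) s (L * s) := by
  intro S hS
  obtain ⟨V, hV, ⟨_, ⟨a, ha, rfl⟩, rfl⟩⟩ := mem_iUnion₂.1 hS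
  set K := connectedComponentIn (Prod.snd '' (zigzagMap L ⁻¹' V)) a.2
  have hK : ∀ u ∈ K, ∀ v ∈ K, |u - v| ≤ 2 * (L * s) := by
    intro u hu v hv
    rw [← mul_assoc]
    refine isPreconnected_connectedComponentIn.abs_sub_le_of_abs_zigzag_sub_le hL hs ?_ hu hv
    intro u hu v hv
    obtain ⟨p, hp, rfl⟩ := connectedComponentIn_subset _ _ hu
    obtain ⟨q, hq, rfl⟩ := connectedComponentIn_subset _ _ hv
    exact (le_max_right _ _).trans ((dist_zigzagMap L p q).symm ▸ h V hV _ hp _ hq)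
  obtain ⟨c, hKc⟩ := exists_subset_closedBall_of_forall_abs_sub_le
    ⟨a.2, mem_connectedComponentIn (mem_image_of_mem _ ha)⟩ hK
  refine ⟨a.1, c, fun p hp => ⟨?_, hKc hp.2⟩⟩
  exact (le_max_left _ _).trans ((dist_zigzagMap L p a).symm ▸ h V hV _ hp.1 _ ha)

lemma lProdGE_zigzagSlices [PseudoMetricSpace X] {ρ : ℝ} (hL : 0 < L) (hρ : 0 ≤ ρ)
    (h : ∀ z, ∃ V ∈ U₀, closedBall z ρ ⊆ V) : LProdGE (zigzagSlices L U₀) ρ (L * ρ) := by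
  rintro ⟨x, t⟩
  obtain ⟨V, hV, hball⟩ := h (zigzagMap L (x, t))
  have hbox : closedBall x ρ ×ˢ closedBall t (L * ρ) ⊆ zigzagMap L ⁻¹' V := by
    rintro p ⟨hx, ht⟩
    refine hball ((dist_zigzagMap_le hL p (x, t)).trans (max_le hx ?_))
    exact (div_le_iff₀' hL).2 ht
  obtain ⟨S, hS, hboxS⟩ := exists_mem_componentSlices_superset hbox
    ((nonempty_closedBall.2 hρ).prod (nonempty_closedBall.2 (by positivity)))
    (by rw [snd_image_prod (nonempty_closedBall.2 hρ), Real.closedBall_eq_Icc]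
        exact isPreconnected_Icc)
  exact ⟨S, mem_iUnion₂.2 ⟨V, hV, hS⟩, hboxS⟩

end ZigzagSlices

/-- **Lemma (Rcov), part 1.** If `ℓ-dim (X × [0,1]) ≤ k` then there are `τ₀ > 0`, `σ > 1`
such that for all `0 < τ < τ₀` and `τ' > 0` there is a `(k+1)`-colored open covering `U` of
`X × ℝ` with `mesh^×(U) ≤ (σ τ, σ τ')` and `L^×(U) ≥ (τ, τ')`. -/
theorem rcov_one
    {X : Type*} [MetricSpace X] (k : ℕ)
    (h : elldim (X × Set.Icc (0:ℝ) 1) ≤ (k : ℕ∞)) :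
    ∃ τ₀ : ℝ, 0 < τ₀ ∧ ∃ σ : ℝ, 1 < σ ∧
      ∀ τ : ℝ, 0 < τ → τ < τ₀ → ∀ τ' : ℝ, 0 < τ' →
        ∃ U : Set (Set (X × ℝ)), IsOpenFamily U ∧ IsCoveringOf U Set.univ ∧
          IsColored U (k + 1) ∧ MeshProdLE U (σ * τ) (σ * τ') ∧ LProdGE U τ τ' := by
  obtain ⟨m, hmk, δ, ⟨hδ₀, hδ₁⟩, τ₁, hτ₁, H⟩ := exists_elldimLE_of_elldim_le h
  refine ⟨min (δ * τ₁ / 2) (δ / 2), by positivity, 2 / δ, (one_lt_div hδ₀).2 (by linarith),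
    fun τ hτ hτ₀ τ' hτ' => ?_⟩
  have hτ₀₁ := hτ₀.trans_le (min_le_left _ _)
  have hτ₀₂ := hτ₀.trans_le (min_le_right _ _)
  have hs₀ : 0 < 2 / δ * τ := by positivity
  have hs₁ : 2 / δ * τ < 1 := by rw [div_mul_eq_mul_div, div_lt_one hδ₀]; linarith
  obtain ⟨U₀, hopen, hcov, hcol, hmesh, hleb⟩ :=
    H (2 / δ * τ) hs₀ (by rw [div_mul_eq_mul_div, div_lt_iff₀ hδ₀]; linarith)
  have hL : 0 < τ' / τ := div_pos hτ' hτ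
  refine ⟨zigzagSlices (τ' / τ) U₀, isOpenFamily_zigzagSlices hopen,
    isCoveringOf_zigzagSlices hcov, (isColored_zigzagSlices hcol).mono (by omega), ?_, ?_⟩
  · convert meshProdLE_zigzagSlices hL hs₁ fun V hV p hp q hq =>
      dist_le_of_meshF_le hs₀.le hmesh hV hp hq using 1
    field_simp
  · convert lProdGE_zigzagSlices hL hτ.le <| exists_closedBall_subset_of_le_lebesgueF hτ.le
      (by field_simp; linarith) hleb using 1
    field_simp
end
end

section
/- Let X₁, X₂ be metric spaces and assume that the spaces of the family {a·X₁ × b·X₂ : a ≥ 1, b ≥ 1} (products with the l∞ metric) have ℓ-dim ≤ k uniformly. Then there exist τ₀ > 0 and σ > 1 so that for every 0 < τ₁, τ₂ < τ₀ and every τ₁′, τ₂′ > 0 there exists a (k+3)-colored open covering 𝒲 of Z = X₁ × X₂ × ℝ × ℝ with mesh^×(𝒲) ≤ (στ₁, στ₂, στ₁′, στ₂′) and L^×(𝒲) ≥ (τ₁, τ₂, τ₁′, τ₂′). -/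
open Metric Set Filter ENNReal NNReal

noncomputable section

open PaperDefs


section Aux

lemma int_mul_abs_lt {q : ℤ} {c : ℝ} (hc : 0 < c) (h : |(q:ℝ) * c| < c) : q = 0 := by
  rw [abs_mul, abs_of_pos hc] at h
  have h1 : |(q:ℝ)| < 1 := by
    by_contra hq
    push_neg at hq
    nlinarith
  have h2 : |q| < 1 := by exact_mod_cast (by rwa [← Int.cast_abs] at h1 : ((|q|:ℤ):ℝ) < 1)
  rwa [Int.abs_lt_one_iff] at h2

lemma grid_inj {n : ℕ} (hn : 0 < n) {T : ℝ} (hT : 0 < T) {i i' : Fin n} {m m' : ℤ}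
    (h : |((m:ℝ) * ((n:ℝ)*T) + (i:ℕ)*T) - ((m':ℝ) * ((n:ℝ)*T) + ((i':Fin n):ℕ)*T)| < T) :
    i = i' ∧ m = m' := by
  set d : ℤ := (m - m') * n + (i:ℕ) - ((i':Fin n):ℕ) with hd
  have hcast : ((m:ℝ) * ((n:ℝ)*T) + (i:ℕ)*T) - ((m':ℝ) * ((n:ℝ)*T) + ((i':Fin n):ℕ)*T)
      = (d:ℝ) * T := by push_cast [hd]; ring
  rw [hcast] at h
  have hd0 : d = 0 := int_mul_abs_lt hT h
  have hi : ((i:ℕ):ℤ) < n := by exact_mod_cast i.isLt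
  have hi' : (((i':Fin n):ℕ):ℤ) < n := by exact_mod_cast i'.isLt
  have hi0 : (0:ℤ) ≤ ((i:ℕ):ℤ) := by positivity
  have hi0' : (0:ℤ) ≤ (((i':Fin n):ℕ):ℤ) := by positivity
  have hq : (m - m') * (n:ℤ) = (((i':Fin n):ℕ):ℤ) - ((i:ℕ):ℤ) := by
    have := hd0
    rw [hd] at this
    linarith
  have hm : m = m' := by
    rcases lt_trichotomy m m' with hlt|heq|hgt
    · exfalso
      have h1 : m - m' ≤ -1 := by omega
      have h2 : (m - m') * (n:ℤ) ≤ (-1) * n :=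
        mul_le_mul_of_nonneg_right h1 (by omega)
      linarith
    · exact heq
    · exfalso
      have h1 : 1 ≤ m - m' := by omega
      have h2 : (1:ℤ) * n ≤ (m - m') * n :=
        mul_le_mul_of_nonneg_right h1 (by omega)
      linarith
  subst hm
  simp only [sub_self, zero_mul] at hq
  exact ⟨Fin.ext (by omega), rfl⟩

lemma step_lemma {Y : Type*} [TopologicalSpace Y] {n : ℕ} (hn : 0 < n)
    (F : Fin n → Set (Set Y))
    (hdisj : ∀ i, (F i).Pairwise Disjoint)
    (hopen : ∀ i, ∀ V ∈ F i, IsOpen V)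
    {P : Type*} (Box : P → Set Y)
    (hleb : ∀ p, ∃ i, ∃ V ∈ F i, Box p ⊆ V)
    (τ : ℝ) (hτ : 0 < τ) :
    ∃ G : Fin (n+1) → Set (Set (Y × ℝ)),
      (∀ j, (G j).Pairwise Disjoint) ∧
      (∀ j, ∀ S ∈ G j, IsOpen S) ∧
      (∀ j, ∀ S ∈ G j, ∃ i, ∃ V ∈ F i, ∃ c : ℝ, S ⊆ V ×ˢ Metric.closedBall c (4*(n:ℝ)*τ)) ∧
      (∀ p, ∀ t : ℝ, ∃ j, ∃ S ∈ G j, (Box p) ×ˢ Metric.closedBall t τ ⊆ S) := by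
  have hn1 : (1:ℝ) ≤ n := by exact_mod_cast hn
  obtain ⟨T, hTdef⟩ : ∃ T : ℝ, T = 8 * τ := ⟨_, rfl⟩
  have hT : 0 < T := by rw [hTdef]; positivity
  obtain ⟨nT, hnTdef⟩ : ∃ nT : ℝ, nT = (n:ℝ) * T := ⟨_, rfl⟩
  have hnT : 0 < nT := by rw [hnTdef]; positivity
  have hTnT : T ≤ nT := by rw [hnTdef]; nlinarith
  obtain ⟨L, hL⟩ : ∃ L : Fin n → ℤ → ℝ, ∀ (i : Fin n) (m : ℤ),
      L i m = (m:ℝ) * nT + ((i:ℕ):ℝ) * T := ⟨fun i m => (m:ℝ) * nT + ((i:ℕ):ℝ) * T,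
      fun _ _ => rfl⟩
  obtain ⟨mainFam, hmain⟩ : ∃ mF : Fin n → Set (Set (Y × ℝ)),
      mF = fun i => {S | ∃ m : ℤ, ∃ V ∈ F i, S = V ×ˢ Set.Ioo (L i m) (L i m + nT)} := ⟨_, rfl⟩
  obtain ⟨bandFam, hband⟩ : ∃ bF : Set (Set (Y × ℝ)),
      bF = {S | ∃ i : Fin n, ∃ m : ℤ, ∃ V ∈ F i,
        S = V ×ˢ Set.Ioo (L i m - T/2) (L i m + T/2)} := ⟨_, rfl⟩
  have hLdiff : ∀ (i i' : Fin n) (m m' : ℤ),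
      L i m - L i' m' = (((m - m' : ℤ)):ℝ) * nT + ((i:ℕ):ℝ) * T - ((i':ℕ):ℝ) * T := by
    intro i i' m m'; rw [hL, hL]; push_cast; ring
  -- pairwise disjointness of mainFam i
  have hmaindisj : ∀ i, (mainFam i).Pairwise Disjoint := by
    intro i S hS S' hS' hne
    rw [hmain] at hS hS'
    obtain ⟨m, V, hV, rfl⟩ := hS
    obtain ⟨m', V', hV', rfl⟩ := hS'
    rw [Set.disjoint_left]
    rintro ⟨y, t⟩ ⟨hy, ht⟩ ⟨hy', ht'⟩
    simp only [Set.mem_Ioo] at ht ht'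
    have hmm : m = m' := by
      have hd := hLdiff i i m m'
      have habs : |(((m - m'):ℤ):ℝ) * nT| < nT := by
        rw [abs_lt]; constructor <;> linarith [ht.1, ht.2, ht'.1, ht'.2]
      have := int_mul_abs_lt hnT habs
      omega
    subst hmm
    have hVV : V ≠ V' := by rintro rfl; exact hne rfl
    exact Set.disjoint_left.mp (hdisj i hV hV' hVV) hy hy'
  -- pairwise disjointness of bandFam
  have hbanddisj : bandFam.Pairwise Disjoint := by
    intro S hS S' hS' hne
    rw [hband] at hS hS'
    obtain ⟨i, m, V, hV, rfl⟩ := hS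
    obtain ⟨i', m', V', hV', rfl⟩ := hS'
    rw [Set.disjoint_left]
    rintro ⟨y, t⟩ ⟨hy, ht⟩ ⟨hy', ht'⟩
    simp only [Set.mem_Ioo] at ht ht'
    have hkey : i = i' ∧ m = m' := by
      apply grid_inj hn hT
      have h1 : |L i m - L i' m'| < T := by
        rw [abs_lt]; constructor <;> linarith [ht.1, ht.2, ht'.1, ht'.2]
      rw [hL, hL, hnTdef] at h1
      exact h1
    obtain ⟨rfl, rfl⟩ := hkey
    have hVV : V ≠ V' := by rintro rfl; exact hne rfl
    exact Set.disjoint_left.mp (hdisj i hV hV' hVV) hy hy'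
  refine ⟨fun j => Fin.lastCases bandFam mainFam j, ?_, ?_, ?_, ?_⟩
  · intro j
    induction j using Fin.lastCases with
    | last => simpa using hbanddisj
    | cast i => simpa using hmaindisj i
  · intro j S hS
    induction j using Fin.lastCases with
    | last =>
      simp only [Fin.lastCases_last, hband] at hS
      obtain ⟨i, m, V, hV, rfl⟩ := hS
      exact (hopen i V hV).prod isOpen_Ioo
    | cast i =>
      simp only [Fin.lastCases_castSucc, hmain] at hS
      obtain ⟨m, V, hV, rfl⟩ := hS
      exact (hopen i V hV).prod isOpen_Ioo
  · intro j S hS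
    induction j using Fin.lastCases with
    | last =>
      simp only [Fin.lastCases_last, hband] at hS
      obtain ⟨i, m, V, hV, rfl⟩ := hS
      refine ⟨i, V, hV, L i m, Set.prod_mono subset_rfl ?_⟩
      intro t ht
      simp only [Set.mem_Ioo] at ht
      rw [Metric.mem_closedBall, Real.dist_eq, abs_le]
      constructor <;> nlinarith [ht.1, ht.2]
    | cast i =>
      simp only [Fin.lastCases_castSucc, hmain] at hS
      obtain ⟨m, V, hV, rfl⟩ := hS
      refine ⟨i, V, hV, L i m + nT/2, Set.prod_mono subset_rfl ?_⟩
      intro t ht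
      simp only [Set.mem_Ioo] at ht
      rw [Metric.mem_closedBall, Real.dist_eq, abs_le]
      have hnT4 : nT/2 ≤ 4*(n:ℝ)*τ := by rw [hnTdef, hTdef]; nlinarith
      constructor <;> nlinarith [ht.1, ht.2]
  · intro p t
    obtain ⟨i, V, hV, hBox⟩ := hleb p
    obtain ⟨m, hm⟩ : ∃ m : ℤ, m = ⌊(t - (i:ℕ) * T) / nT⌋ := ⟨_, rfl⟩
    have hm1 : L i m ≤ t := by
      have h1 : ((⌊(t - (i:ℕ) * T) / nT⌋ : ℤ):ℝ) ≤ (t - (i:ℕ) * T) / nT := Int.floor_le _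
      rw [← hm] at h1
      have := (le_div_iff₀ hnT).mp h1
      rw [hL]; linarith
    have hm2 : t < L i m + nT := by
      have h1 : (t - (i:ℕ) * T) / nT < ((⌊(t - (i:ℕ) * T) / nT⌋ : ℤ):ℝ) + 1 :=
        Int.lt_floor_add_one _
      rw [← hm] at h1
      have := (div_lt_iff₀ hnT).mp h1
      rw [hL]; nlinarith
    rcases le_or_gt t (L i m + 2*τ) with hB | hrest
    · refine ⟨Fin.last n, V ×ˢ Set.Ioo (L i m - T/2) (L i m + T/2), ?_, ?_⟩
      · simp only [Fin.lastCases_last, hband]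
        exact ⟨i, m, V, hV, rfl⟩
      · refine Set.prod_mono hBox ?_
        intro s hs
        rw [Metric.mem_closedBall, Real.dist_eq, abs_le] at hs
        simp only [Set.mem_Ioo]
        constructor <;> nlinarith [hs.1, hs.2]
    · rcases le_or_gt (L i m + nT - 2*τ) t with hC | hA
      · have hLnext : L i (m+1) = L i m + nT := by rw [hL, hL]; push_cast; ring
        refine ⟨Fin.last n, V ×ˢ Set.Ioo (L i (m+1) - T/2) (L i (m+1) + T/2), ?_, ?_⟩
        · simp only [Fin.lastCases_last, hband]
          exact ⟨i, m+1, V, hV, rfl⟩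
        · refine Set.prod_mono hBox ?_
          intro s hs
          rw [Metric.mem_closedBall, Real.dist_eq, abs_le] at hs
          simp only [Set.mem_Ioo, hLnext]
          constructor <;> nlinarith [hs.1, hs.2]
      · refine ⟨Fin.castSucc i, V ×ˢ Set.Ioo (L i m) (L i m + nT), ?_, ?_⟩
        · simp only [Fin.lastCases_castSucc, hmain]
          exact ⟨m, V, hV, rfl⟩
        · refine Set.prod_mono hBox ?_
          intro s hs
          rw [Metric.mem_closedBall, Real.dist_eq, abs_le] at hs
          simp only [Set.mem_Ioo]
          constructor <;> nlinarith [hs.1, hs.2]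


lemma lebesgue_ball {Z : Type*} [PseudoMetricSpace Z] {U : Set (Set Z)} {Lr r : ℝ}
    (h : ENNReal.ofReal Lr ≤ lebesgueF U Set.univ) (hr : 0 ≤ r) (hrL : r < Lr) (z : Z) :
    ∃ V ∈ U, Metric.closedBall z r ⊆ V := by
  have h2 : ENNReal.ofReal Lr ≤ ⨆ V ∈ U, EMetric.infEdist z Vᶜ :=
    le_trans h (iInf₂_le z (Set.mem_univ z))
  have hlt : ENNReal.ofReal r < ⨆ V ∈ U, EMetric.infEdist z Vᶜ :=
    lt_of_lt_of_le ((ENNReal.ofReal_lt_ofReal_iff (lt_of_le_of_lt hr hrL)).mpr hrL) h2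
  rw [lt_iSup_iff] at hlt
  obtain ⟨V, hlt⟩ := hlt
  rw [lt_iSup_iff] at hlt
  obtain ⟨hV, hlt⟩ := hlt
  refine ⟨V, hV, ?_⟩
  intro w hw
  by_contra hwV
  have h3 : EMetric.infEdist z Vᶜ ≤ edist z w := EMetric.infEdist_le_edist_of_mem hwV
  rw [edist_dist] at h3
  have h4 : ENNReal.ofReal (dist z w) ≤ ENNReal.ofReal r :=
    ENNReal.ofReal_le_ofReal (by rw [dist_comm]; exact hw)
  exact absurd (le_trans h3 h4) (not_le.mpr hlt)

lemma mesh_ball {Z : Type*} [PseudoMetricSpace Z] {U : Set (Set Z)} {M : ℝ} (hM : 0 ≤ M)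
    (h : meshF U ≤ ENNReal.ofReal M) {V : Set Z} (hV : V ∈ U) {x : Z} (hx : x ∈ V) :
    V ⊆ Metric.closedBall x M := by
  intro w hw
  have h1 : edist x w ≤ EMetric.diam V := EMetric.edist_le_diam_of_mem hx hw
  have h2 : EMetric.diam V ≤ meshF U := le_iSup₂ (f := fun V _ => EMetric.diam V) V hV
  have h3 : edist x w ≤ ENNReal.ofReal M := le_trans (le_trans h1 h2) h
  rw [edist_dist] at h3
  rw [Metric.mem_closedBall, dist_comm]
  exact (ENNReal.ofReal_le_ofReal_iff hM).mp h3

def toScaledPair {X₁ X₂ : Type*} (a b : ℝ≥0) (z : X₁ × X₂) :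
    Scaled a X₁ × Scaled b X₂ := (z.1, z.2)

lemma dist_toScaledPair {X₁ X₂ : Type*} [PseudoMetricSpace X₁] [PseudoMetricSpace X₂]
    (a b : ℝ≥0) (z w : X₁ × X₂) :
    dist (toScaledPair a b z) (toScaledPair a b w)
      = max ((a:ℝ) * dist z.1 w.1) ((b:ℝ) * dist z.2 w.2) := by
  rw [Prod.dist_eq]; rfl

lemma continuous_toScaledPair {X₁ X₂ : Type*} [PseudoMetricSpace X₁] [PseudoMetricSpace X₂]
    (a b : ℝ≥0) : Continuous (toScaledPair (X₁ := X₁) (X₂ := X₂) a b) := by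
  rw [Metric.continuous_iff]
  intro z ε hε
  refine ⟨ε / ((a:ℝ) + b + 1), by positivity, ?_⟩
  intro w hw
  rw [dist_toScaledPair]
  have h1 : dist w.1 z.1 ≤ dist w z := by rw [Prod.dist_eq]; exact le_max_left _ _
  have h2 : dist w.2 z.2 ≤ dist w z := by rw [Prod.dist_eq]; exact le_max_right _ _
  have ha : (0:ℝ) ≤ a := a.coe_nonneg
  have hb : (0:ℝ) ≤ b := b.coe_nonneg
  have hd : 0 ≤ dist w z := dist_nonneg
  apply max_lt
  · calc (a:ℝ) * dist w.1 z.1 ≤ (a:ℝ) * dist w z := by nlinarith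
    _ ≤ (a:ℝ) * (ε / ((a:ℝ) + b + 1)) := by nlinarith
    _ < ε := by
        rw [mul_div_assoc'] at *
        rw [div_lt_iff₀ (by positivity)]
        nlinarith
  · calc (b:ℝ) * dist w.2 z.2 ≤ (b:ℝ) * dist w z := by nlinarith
    _ ≤ (b:ℝ) * (ε / ((a:ℝ) + b + 1)) := by nlinarith
    _ < ε := by
        rw [mul_div_assoc'] at *
        rw [div_lt_iff₀ (by positivity)]
        nlinarith

def emap {X₁ X₂ : Type*} (z : X₁ × X₂ × ℝ × ℝ) : ((X₁ × X₂) × ℝ) × ℝ :=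
  (((z.1, z.2.1), z.2.2.1), z.2.2.2)

lemma continuous_emap {X₁ X₂ : Type*} [TopologicalSpace X₁] [TopologicalSpace X₂] :
    Continuous (emap (X₁ := X₁) (X₂ := X₂)) := by
  unfold emap; fun_prop

end Aux
set_option maxHeartbeats 1600000 in
/-- **Lemma (Rcov), part 2.** If the family `{a X₁ × b X₂ : a, b ≥ 1}` has `ℓ-dim ≤ k`
uniformly, then there are `τ₀ > 0`, `σ > 1` such that for all `0 < τ₁, τ₂ < τ₀` and
`τ₁', τ₂' > 0` there is a `(k+3)`-colored open covering `W` of `X₁ × X₂ × ℝ × ℝ` with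
`mesh^×(W) ≤ σ (τ₁, τ₂, τ₁', τ₂')` and `L^×(W) ≥ (τ₁, τ₂, τ₁', τ₂')`. -/
theorem rcov_two
    {X₁ X₂ : Type*} [MetricSpace X₁] [MetricSpace X₂] (k : ℕ)
    (hfam : UnifElldimLE (fun p : {p : ℝ≥0 × ℝ≥0 // 1 ≤ p.1 ∧ 1 ≤ p.2} =>
      Scaled p.1.1 X₁ × Scaled p.1.2 X₂) k) :
    ∃ τ₀ : ℝ, 0 < τ₀ ∧ ∃ σ : ℝ, 1 < σ ∧
      ∀ τ₁ τ₂ : ℝ, 0 < τ₁ → τ₁ < τ₀ → 0 < τ₂ → τ₂ < τ₀ →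
      ∀ τ₁' τ₂' : ℝ, 0 < τ₁' → 0 < τ₂' →
        ∃ W : Set (Set (X₁ × X₂ × ℝ × ℝ)), IsOpenFamily W ∧ IsCoveringOf W Set.univ ∧
          IsColored W (k + 3) ∧
          (∀ V ∈ W, ∃ x₁ : X₁, ∃ x₂ : X₂, ∃ r₁ r₂ : ℝ,
            V ⊆ closedBall x₁ (σ * τ₁) ×ˢ (closedBall x₂ (σ * τ₂) ×ˢ
              (closedBall r₁ (σ * τ₁') ×ˢ closedBall r₂ (σ * τ₂')))) ∧
          (∀ (x₁ : X₁) (x₂ : X₂) (r₁ r₂ : ℝ), ∃ V ∈ W,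
            closedBall x₁ τ₁ ×ˢ (closedBall x₂ τ₂ ×ˢ
              (closedBall r₁ τ₁' ×ˢ closedBall r₂ τ₂')) ⊆ V) := by
  classical
  obtain ⟨δ, ⟨hδ0, hδ1⟩, τ₀x, hτ₀x, hcov⟩ := hfam
  obtain ⟨r, hrdef⟩ : ∃ r : ℝ, r = δ * (τ₀x / 2) / 2 := ⟨_, rfl⟩
  have hr0 : 0 < r := by rw [hrdef]; positivity
  have hk0 : (0:ℝ) ≤ (k:ℝ) := Nat.cast_nonneg k
  obtain ⟨σ, hσdef⟩ : ∃ σ : ℝ, σ = 2/δ + 4*((k:ℝ)+2) + 1 := ⟨_, rfl⟩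
  have hδp : (0:ℝ) < 2/δ := by positivity
  have hσδ : 2/δ ≤ σ := by rw [hσdef]; nlinarith
  have hσ1 : 1 < σ := by rw [hσdef]; nlinarith
  have hσk1 : 4*((k:ℝ)+1) ≤ σ := by rw [hσdef]; nlinarith
  have hσk2 : 4*((k:ℝ)+2) ≤ σ := by rw [hσdef]; nlinarith
  refine ⟨r, hr0, σ, hσ1, ?_⟩
  intro τ₁ τ₂ hτ₁ hτ₁r hτ₂ hτ₂r τ₁' τ₂' hτ₁' hτ₂'
  have hbnd1 : 4*(((k+1:ℕ)):ℝ)*τ₁' ≤ σ*τ₁' := by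
    push_cast
    nlinarith [hσk1, hτ₁']
  have hbnd2 : 4*(((k+1+1:ℕ)):ℝ)*τ₂' ≤ σ*τ₂' := by
    push_cast
    nlinarith [hσk2, hτ₂']
  by_cases hne : Nonempty (X₁ × X₂)
  swap
  · refine ⟨∅, ?_, ?_, ?_, ?_, ?_⟩
    · intro V hV; exact absurd hV (Set.notMem_empty V)
    · intro z _; exact absurd ⟨(z.1, z.2.1)⟩ hne
    · exact ⟨fun _ => ∅, by simp, fun _ => Set.pairwise_empty _⟩
    · intro V hV; exact absurd hV (Set.notMem_empty V)
    · intro x₁ x₂ r₁ r₂; exact absurd ⟨(x₁, x₂)⟩ hne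
  obtain ⟨x0⟩ := hne
  have ha0 : 0 < r / τ₁ := by positivity
  have hb0 : 0 < r / τ₂ := by positivity
  obtain ⟨a, hacoe⟩ : ∃ a : ℝ≥0, (a:ℝ) = r / τ₁ := ⟨⟨r/τ₁, ha0.le⟩, rfl⟩
  obtain ⟨b, hbcoe⟩ : ∃ b : ℝ≥0, (b:ℝ) = r / τ₂ := ⟨⟨r/τ₂, hb0.le⟩, rfl⟩
  have ha1 : 1 ≤ a := by
    rw [← NNReal.coe_le_coe, hacoe, NNReal.coe_one]
    exact (one_le_div hτ₁).mpr hτ₁r.le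
  have hb1 : 1 ≤ b := by
    rw [← NNReal.coe_le_coe, hbcoe, NNReal.coe_one]
    exact (one_le_div hτ₂).mpr hτ₂r.le
  obtain ⟨U, hUopen, hUcov, hUcol, hUmesh, hUleb⟩ :=
    hcov (τ₀x/2) (by positivity) (by linarith) ⟨(a, b), ha1, hb1⟩
  obtain ⟨Fc, hFceq, hFcdisj⟩ := hUcol
  obtain ⟨F0, hF0⟩ : ∃ F0 : Fin (k+1) → Set (Set (X₁ × X₂)),
      F0 = fun i => (fun V => toScaledPair a b ⁻¹' V) '' (Fc i) := ⟨_, rfl⟩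
  have hF0disj : ∀ i, (F0 i).Pairwise Disjoint := by
    intro i s hs s' hs' hne'
    rw [hF0] at hs hs'
    obtain ⟨V, hV, rfl⟩ := hs
    obtain ⟨V', hV', rfl⟩ := hs'
    have hVV : V ≠ V' := by rintro rfl; exact hne' rfl
    exact (hFcdisj i hV hV' hVV).preimage _
  have hmemU : ∀ {i V}, V ∈ Fc i → V ∈ U := by
    intro i V hV; rw [hFceq]; exact Set.mem_iUnion.mpr ⟨i, hV⟩
  have hF0open : ∀ i, ∀ V ∈ F0 i, IsOpen V := by
    intro i V hV
    rw [hF0] at hV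
    obtain ⟨V', hV', rfl⟩ := hV
    exact (hUopen V' (hmemU hV')).preimage (continuous_toScaledPair a b)
  have hc0 : (0:ℝ) < τ₀x/2 := by positivity
  have hrδ : r < δ * (τ₀x/2) := by rw [hrdef]; nlinarith [mul_pos hδ0 hc0]
  have haτ : (a:ℝ) * τ₁ = r := by rw [hacoe]; field_simp
  have hbτ : (b:ℝ) * τ₂ = r := by rw [hbcoe]; field_simp
  have hF0leb : ∀ p : X₁ × X₂, ∃ i, ∃ V ∈ F0 i,
      (Metric.closedBall p.1 τ₁ ×ˢ Metric.closedBall p.2 τ₂) ⊆ V := by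
    intro p
    obtain ⟨V, hVU, hball⟩ := lebesgue_ball hUleb hr0.le hrδ (toScaledPair a b p)
    rw [hFceq] at hVU
    obtain ⟨i, hVi⟩ := Set.mem_iUnion.mp hVU
    refine ⟨i, toScaledPair a b ⁻¹' V, by rw [hF0]; exact Set.mem_image_of_mem _ hVi, ?_⟩
    intro w hw
    obtain ⟨hw1, hw2⟩ := hw
    have hmem : toScaledPair a b w ∈ Metric.closedBall (toScaledPair a b p) r := by
      rw [Metric.mem_closedBall, dist_toScaledPair]
      apply max_le
      · calc (a:ℝ) * dist w.1 p.1 ≤ (a:ℝ) * τ₁ :=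
            mul_le_mul_of_nonneg_left hw1 a.coe_nonneg
          _ = r := haτ
      · calc (b:ℝ) * dist w.2 p.2 ≤ (b:ℝ) * τ₂ :=
            mul_le_mul_of_nonneg_left hw2 b.coe_nonneg
          _ = r := hbτ
    exact hball hmem
  have hF0mesh : ∀ i, ∀ V ∈ F0 i, ∃ x₁ : X₁, ∃ x₂ : X₂,
      V ⊆ Metric.closedBall x₁ (σ * τ₁) ×ˢ Metric.closedBall x₂ (σ * τ₂) := by
    intro i V hV
    rw [hF0] at hV
    obtain ⟨V', hV', rfl⟩ := hV
    rcases Set.eq_empty_or_nonempty (toScaledPair a b ⁻¹' V') with hemp | ⟨w, hw⟩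
    · exact ⟨x0.1, x0.2, fun z hz =>
        (Set.eq_empty_iff_forall_notMem.mp hemp z hz).elim⟩
    · refine ⟨w.1, w.2, ?_⟩
      have hw' : toScaledPair a b w ∈ V' := hw
      have hsub := mesh_ball hc0.le hUmesh (hmemU hV') hw'
      intro z hz
      have hz' : toScaledPair a b z ∈ V' := hz
      have hz2 := hsub hz'
      rw [Metric.mem_closedBall, dist_toScaledPair] at hz2
      have hd1 : (a:ℝ) * dist z.1 w.1 ≤ τ₀x/2 := le_trans (le_max_left _ _) hz2
      have hd2 : (b:ℝ) * dist z.2 w.2 ≤ τ₀x/2 := le_trans (le_max_right _ _) hz2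
      have key : ∀ (d c : ℝ) (x : ℝ≥0), 0 ≤ d → 0 < c → (x:ℝ) * c = r →
          (x:ℝ) * d ≤ τ₀x/2 → d ≤ σ * c := by
        intro d c x hd hc hxc hxd
        have h3 : d * r ≤ (τ₀x/2) * c := by
          calc d * r = (x:ℝ) * d * c := by rw [← hxc]; ring
          _ ≤ (τ₀x/2) * c := mul_le_mul_of_nonneg_right hxd hc.le
        have h4 : d ≤ 2/δ * c := by
          rw [hrdef] at h3
          rw [div_mul_eq_mul_div, le_div_iff₀ hδ0]
          nlinarith [h3, hc0]
        calc d ≤ 2/δ * c := h4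
        _ ≤ σ * c := mul_le_mul_of_nonneg_right hσδ hc.le
      exact ⟨key _ _ a dist_nonneg hτ₁ haτ hd1, key _ _ b dist_nonneg hτ₂ hbτ hd2⟩
  obtain ⟨G1, hG1disj, hG1open, hG1mesh, hG1leb⟩ :=
    step_lemma (Nat.succ_pos k) F0 hF0disj hF0open
      (fun p : X₁ × X₂ => Metric.closedBall p.1 τ₁ ×ˢ Metric.closedBall p.2 τ₂)
      hF0leb τ₁' hτ₁'
  obtain ⟨G2, hG2disj, hG2open, hG2mesh, hG2leb⟩ :=
    step_lemma (Nat.succ_pos (k+1)) G1 hG1disj hG1open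
      (fun q : (X₁ × X₂) × ℝ =>
        (Metric.closedBall q.1.1 τ₁ ×ˢ Metric.closedBall q.1.2 τ₂) ×ˢ
          Metric.closedBall q.2 τ₁')
      (fun q => hG1leb q.1 q.2) τ₂' hτ₂'
  refine ⟨⋃ j : Fin (k+3), (fun S => emap ⁻¹' S) '' G2 j, ?_, ?_, ?_, ?_, ?_⟩
  · intro V hV
    rw [Set.mem_iUnion] at hV
    obtain ⟨j, S, hS, rfl⟩ := hV
    exact (hG2open j S hS).preimage continuous_emap
  · intro z _
    obtain ⟨j, S, hS, hsub⟩ := hG2leb ((z.1, z.2.1), z.2.2.1) z.2.2.2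
    exact Set.mem_sUnion.mpr ⟨emap ⁻¹' S,
      Set.mem_iUnion.mpr ⟨j, Set.mem_image_of_mem _ hS⟩,
      hsub ⟨⟨⟨Metric.mem_closedBall_self hτ₁.le, Metric.mem_closedBall_self hτ₂.le⟩,
        Metric.mem_closedBall_self hτ₁'.le⟩, Metric.mem_closedBall_self hτ₂'.le⟩⟩
  · refine ⟨fun j => (fun S => emap ⁻¹' S) '' G2 j, rfl, ?_⟩
    intro j s hs s' hs' hne'
    obtain ⟨S, hS, rfl⟩ := hs
    obtain ⟨S', hS', rfl⟩ := hs'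
    have hSS : S ≠ S' := by rintro rfl; exact hne' rfl
    exact (hG2disj j hS hS' hSS).preimage _
  · intro V hV
    rw [Set.mem_iUnion] at hV
    obtain ⟨j, S, hS, rfl⟩ := hV
    obtain ⟨j1, S1, hS1, c2, hsub2⟩ := hG2mesh j S hS
    obtain ⟨i0, V0, hV0, c1, hsub1⟩ := hG1mesh j1 S1 hS1
    obtain ⟨x₁, x₂, hsub0⟩ := hF0mesh i0 V0 hV0
    refine ⟨x₁, x₂, c1, c2, ?_⟩
    intro z hz
    have h2 := hsub2 hz
    have h1 := hsub1 h2.1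
    have h0 := hsub0 h1.1
    exact ⟨h0.1, h0.2, Metric.closedBall_subset_closedBall hbnd1 h1.2,
      Metric.closedBall_subset_closedBall hbnd2 h2.2⟩
  · intro x₁ x₂ r₁ r₂
    obtain ⟨j, S, hS, hsub⟩ := hG2leb ((x₁, x₂), r₁) r₂
    refine ⟨emap ⁻¹' S, Set.mem_iUnion.mpr ⟨j, Set.mem_image_of_mem _ hS⟩, ?_⟩
    intro z hz
    exact hsub ⟨⟨⟨hz.1, hz.2.1⟩, hz.2.2.1⟩, hz.2.2.2⟩
end
end

section
/- Let X and Y be compact, locally self-similar metric spaces, and let n = dim(X × Y) be the topological covering dimension of X × Y. Then the spaces of the family {a·X × b·Y : a ≥ 1, b ≥ 1} (products with the l∞ metric) have ℓ-dim ≤ n uniformly. -/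
open Metric Set Filter ENNReal NNReal

noncomputable section

open PaperDefs

namespace SsimProof

open Metric Set Filter ENNReal NNReal PaperDefs

set_option maxHeartbeats 2000000

variable {Z : Type*} [PseudoMetricSpace Z]

/-- A colored family of sets: each color class is `sep`-separated, all members have
diameter (pointwise) at most `mesh`, and the union covers `S`. -/
structure SepFam (Nc : ℕ) (S : Set Z) (sep mesh : ℝ) (F : Fin Nc → Set (Set Z)) : Prop where
  covers : S ⊆ ⋃ i, ⋃₀ F i
  sepd : ∀ i, ∀ A ∈ F i, ∀ B ∈ F i, A ≠ B → ∀ p ∈ A, ∀ q ∈ B, sep ≤ dist p q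
  meshd : ∀ i, ∀ A ∈ F i, ∀ p ∈ A, ∀ q ∈ A, dist p q ≤ mesh

theorem SepFam.weaken {Nc : ℕ} {S S' : Set Z} {sep sep' mesh mesh' : ℝ}
    {F : Fin Nc → Set (Set Z)} (h : SepFam Nc S sep mesh F)
    (hS : S' ⊆ S) (hsep : sep' ≤ sep) (hmesh : mesh ≤ mesh') : SepFam Nc S' sep' mesh' F :=
  ⟨hS.trans h.covers,
   fun i A hA B hB hAB p hp q hq => hsep.trans (h.sepd i A hA B hB hAB p hp q hq),
   fun i A hA p hp q hq => (h.meshd i A hA p hp q hq).trans hmesh⟩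

/-- Greedy coloring of a finite graph with reflexive symmetric adjacency `E` and
closed-neighborhood size at most `P`. -/
theorem exists_coloring {α : Type*} [DecidableEq α] (P : ℕ) (hP : 0 < P)
    (E : α → α → Prop) [∀ a, DecidablePred (E a)]
    (hsymm : ∀ a b, E a b → E b a) (hrefl : ∀ a, E a a) (s : Finset α)
    (hdeg : ∀ a ∈ s, (s.filter (fun b => E a b)).card ≤ P) :
    ∃ col : α → Fin P, ∀ a ∈ s, ∀ b ∈ s, a ≠ b → E a b → col a ≠ col b := by
  classical
  induction s using Finset.induction_on with
  | empty => exact ⟨fun _ => ⟨0, hP⟩, by simp⟩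
  | @insert a t ha ih =>
    obtain ⟨col, hcol⟩ := ih (fun x hx => le_trans (Finset.card_le_card
      (Finset.filter_subset_filter _ (Finset.subset_insert a t)))
      (hdeg x (Finset.mem_insert_of_mem hx)))
    -- neighbors of a in t
    have hnb : True := trivial
    let nb := t.filter (fun b => E a b)
    have hcard : nb.card < P := by
      show (t.filter (fun b => E a b)).card < P
      have h1 : insert a nb ⊆ (insert a t).filter (fun b => E a b) := by
        intro x hx
        rcases Finset.mem_insert.1 hx with rfl | hx
        · exact Finset.mem_filter.2 ⟨Finset.mem_insert_self _ _, hrefl x⟩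
        · rcases Finset.mem_filter.1 hx with ⟨hxt, hxe⟩
          exact Finset.mem_filter.2 ⟨Finset.mem_insert_of_mem hxt, hxe⟩
      have h2 := (Finset.card_le_card h1).trans (hdeg a (Finset.mem_insert_self _ _))
      rw [Finset.card_insert_of_notMem (fun hc => ha (Finset.mem_of_mem_filter _ hc))] at h2
      omega
    have hex : ∃ c : Fin P, c ∉ nb.image col := by
      by_contra hc
      push_neg at hc
      have : (Finset.univ : Finset (Fin P)).card ≤ (nb.image col).card :=
        Finset.card_le_card (fun c _ => hc c)
      have h3 : (nb.image col).card ≤ nb.card := Finset.card_image_le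
      simp [Finset.card_univ] at this
      omega
    obtain ⟨c, hc⟩ := hex
    refine ⟨Function.update col a c, ?_⟩
    intro x hx y hy hxy hE
    rcases Finset.mem_insert.1 hx with rfl | hx' <;> rcases Finset.mem_insert.1 hy with rfl | hy'
    · exact absurd rfl hxy
    · have hyne : y ≠ x := fun h => ha (h ▸ hy')
      rw [Function.update_self, Function.update_of_ne hyne]
      intro h
      exact hc (Finset.mem_image.2 ⟨y, Finset.mem_filter.2 ⟨hy', hE⟩, h.symm⟩)
    · have hxne : x ≠ y := fun h => ha (h ▸ hx')
      rw [Function.update_self, Function.update_of_ne hxne]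
      intro h
      exact hc (Finset.mem_image.2 ⟨x, Finset.mem_filter.2 ⟨hx', hsymm _ _ hE⟩, h⟩)
    · have hxne : x ≠ a := fun h => ha (h ▸ hx')
      have hyne : y ≠ a := fun h => ha (h ▸ hy')
      rw [Function.update_of_ne hxne, Function.update_of_ne hyne]
      exact hcol x hx' y hy' hxy hE

/-- Cardinality of a strictly `r`-separated finset is bounded by the cardinality of an
`(r/2)`-net. -/
theorem card_le_of_separated {X : Type*} [PseudoMetricSpace X] {r : ℝ}
    (s : Finset X) (hsep : ∀ a ∈ s, ∀ b ∈ s, a ≠ b → r < dist a b)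
    (t : Finset X) (hcov : ∀ a ∈ s, ∃ c ∈ t, dist a c ≤ r / 2) :
    s.card ≤ t.card := by
  classical
  have : ∀ a ∈ s, ∃ c ∈ t, dist a c ≤ r / 2 := hcov
  choose f hf1 hf2 using this
  have : Set.InjOn (fun a : {x // x ∈ s} => f a.1 a.2) Set.univ := by
    intro ⟨a, hA⟩ _ ⟨b, hB⟩ _ hab
    simp only at hab
    ext1
    by_contra hne
    have := hsep a hA b hB hne
    have h1 := hf2 a hA
    have h2 := hf2 b hB
    have : dist a b ≤ r := by
      calc dist a b ≤ dist a (f a hA) + dist (f b hB) b := by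
            rw [hab]; exact dist_triangle _ _ _
        _ ≤ r / 2 + r / 2 := add_le_add h1 (dist_comm (f b hB) b ▸ h2)
        _ = r := by ring
    linarith [hsep a hA b hB hne]
  calc s.card = (s.attach).card := (Finset.card_attach).symm
    _ ≤ t.card := by
        apply Finset.card_le_card_of_injOn (fun a => f a.1 a.2) (fun a _ => hf1 a.1 a.2)
        intro a _ b _ hab
        exact this (Set.mem_univ a) (Set.mem_univ b) hab

/-- Existence of a maximal strictly `r`-separated net in a compact space. -/
theorem exists_net {X : Type*} [PseudoMetricSpace X] (hc : IsCompact (univ : Set X))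
    (r : ℝ) (hr : 0 < r) :
    ∃ s : Finset X, (∀ a ∈ s, ∀ b ∈ s, a ≠ b → r < dist a b) ∧
      ∀ x : X, ∃ c ∈ s, dist x c ≤ r := by
  classical
  obtain ⟨t, htfin, htcov⟩ := (Metric.totallyBounded_iff.1 hc.totallyBounded) (r/2) (by linarith)
  set tf := htfin.toFinset with htf
  have hcov' : ∀ x : X, ∃ c ∈ tf, dist x c ≤ r / 2 := by
    intro x
    have := htcov (Set.mem_univ x)
    simp only [Set.mem_iUnion] at this
    obtain ⟨c, hct, hxc⟩ := this
    exact ⟨c, htfin.mem_toFinset.2 hct, le_of_lt (by simpa [Metric.mem_ball] using hxc)⟩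
  set Psep : ℕ → Prop := fun k => ∃ s : Finset X,
    (∀ a ∈ s, ∀ b ∈ s, a ≠ b → r < dist a b) ∧ s.card = k with hPsep
  have hbound : ∀ k, Psep k → k ≤ tf.card := by
    rintro k ⟨s, hs, rfl⟩
    exact card_le_of_separated s hs tf (fun a _ => hcov' a)
  have h0 : Psep 0 := ⟨∅, by simp, rfl⟩
  set K := Nat.findGreatest Psep tf.card with hK
  have hPK : Psep K := Nat.findGreatest_spec (Nat.zero_le _) h0
  obtain ⟨s, hs, hcard⟩ := hPK
  refine ⟨s, hs, ?_⟩
  intro x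
  by_contra hx
  push_neg at hx
  have hxs : x ∉ s := by
    intro hxs
    have : r < dist x x := by simpa using hx x hxs
    simp at this
    linarith
  have hnew : Psep (K + 1) := by
    refine ⟨insert x s, ?_, by rw [Finset.card_insert_of_notMem hxs, hcard]⟩
    intro p hA q hB hab
    rcases Finset.mem_insert.1 hA with hpa | hA'
    · rcases Finset.mem_insert.1 hB with hqa | hB'
      · exact absurd (hpa.trans hqa.symm) hab
      · rw [hpa]; exact hx q hB'
    · rcases Finset.mem_insert.1 hB with hqa | hB'
      · rw [hqa, dist_comm]; exact hx p hA'
      · exact hs p hA' q hB' hab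
  have := Nat.le_findGreatest (hbound _ hnew) hnew
  omega

/-- A strictly decreasing chain of finsets loses one element per step. -/
theorem chain_card {β : Type*} (s : ℕ → Finset β) :
    ∀ N : ℕ, (∀ j < N, s (j+1) ⊆ s j) → (∀ j < N, s (j+1) ≠ s j) →
      (s N).card + N ≤ (s 0).card := by
  intro N
  induction N with
  | zero => simp
  | succ N ih =>
    intro hmono hne
    have h1 := ih (fun j hj => hmono j (by omega)) (fun j hj => hne j (by omega))
    have h2 : (s (N+1)).card < (s N).card :=
      Finset.card_lt_card (lt_of_le_of_ne (hmono N (by omega)) (hne N (by omega)))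
    omega

variable {W : Type*} [PseudoMetricSpace W]

/-- From covering dimension `≤ n` and compactness: at every scale `ε` there is an
`(n+1)`-colored covering with mesh `≤ ε` whose color classes are `σ`-separated, `0 < σ ≤ ε`. -/
theorem exists_base_cover (hc : IsCompact (univ : Set W)) {n : ℕ} (hdim : CovDimLE W n)
    (ε : ℝ) (hε : 0 < ε) :
    ∃ p : ℝ × (Fin (n+1) → Set (Set W)), 0 < p.1 ∧ p.1 ≤ ε ∧ SepFam (n+1) univ p.1 ε p.2 := by
  classical
  obtain ⟨V, hVopen, hVcov, hVref, hVmult⟩ := hdim {B | ∃ x : W, B = ball x (ε/4)}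
    (by rintro B ⟨x, rfl⟩; exact isOpen_ball)
    (by intro z _; exact ⟨ball z (ε/4), ⟨z, rfl⟩, mem_ball_self (by linarith)⟩)
  have hVdiam : ∀ A ∈ V, ∀ p ∈ A, ∀ q ∈ A, dist p q ≤ ε / 2 := by
    intro A hA p hp q hq
    obtain ⟨B, ⟨x, rfl⟩, hAB⟩ := hVref A hA
    have h1 := hAB hp; have h2 := hAB hq
    rw [mem_ball] at h1 h2
    calc dist p q ≤ dist p x + dist x q := dist_triangle _ _ _
      _ ≤ ε/4 + ε/4 := add_le_add h1.le ((dist_comm x q) ▸ h2.le)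
      _ = ε/2 := by ring
  have hcov2 : (univ : Set W) ⊆ ⋃ A : V, (A : Set W) := by
    intro z hz
    obtain ⟨A, hA, hzA⟩ := hVcov hz
    exact mem_iUnion.2 ⟨⟨A, hA⟩, hzA⟩
  obtain ⟨t, ht⟩ := hc.elim_finite_subcover (fun A : V => (A : Set W))
    (fun A => hVopen A A.2) hcov2
  set 𝒱 : Finset (Set W) := t.image Subtype.val with h𝒱
  have h𝒱V : ∀ A ∈ 𝒱, A ∈ V := by
    intro A hA
    obtain ⟨B, _, rfl⟩ := Finset.mem_image.1 hA
    exact B.2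
  have h𝒱cov : ∀ z : W, ∃ A ∈ 𝒱, z ∈ A := by
    intro z
    have := ht (mem_univ z)
    simp only [mem_iUnion] at this
    obtain ⟨A, hAt, hzA⟩ := this
    exact ⟨A, Finset.mem_image.2 ⟨A, hAt, rfl⟩, hzA⟩
  by_cases hdegen : ∃ A ∈ 𝒱, (Aᶜ : Set W) = ∅
  · obtain ⟨A, hA, hAc⟩ := hdegen
    have hAuniv : ∀ z : W, z ∈ A := by
      intro z
      by_contra h
      exact absurd hAc (Set.nonempty_iff_ne_empty.1 ⟨z, h⟩)
    refine ⟨(ε, fun i => if i = 0 then {A} else ∅), hε, le_refl _, ?_, ?_, ?_⟩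
    · intro z _
      exact mem_iUnion.2 ⟨0, ⟨A, by simp, hAuniv z⟩⟩
    · intro i S hS S' hS' hne p hp q hq
      exfalso
      apply hne
      replace hS : S ∈ (if i = 0 then ({A} : Set (Set W)) else ∅) := hS
      replace hS' : S' ∈ (if i = 0 then ({A} : Set (Set W)) else ∅) := hS'
      by_cases hi : i = 0
      · rw [if_pos hi, mem_singleton_iff] at hS hS'
        exact hS.trans hS'.symm
      · rw [if_neg hi] at hS
        exact absurd hS (notMem_empty S)
    · intro i S hS p hp q hq
      replace hS : S ∈ (if i = 0 then ({A} : Set (Set W)) else ∅) := hS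
      by_cases hi : i = 0
      · rw [if_pos hi, mem_singleton_iff] at hS
        subst hS
        exact (hVdiam S (h𝒱V S hA) p hp q hq).trans (by linarith)
      · rw [if_neg hi] at hS
        exact absurd hS (notMem_empty S)
  push_neg at hdegen
  have hne𝒱 : ∀ A ∈ 𝒱, (Aᶜ : Set W).Nonempty := hdegen
  obtain ⟨L, hL, hleb⟩ := lebesgue_number_lemma_of_metric_sUnion hc
    (fun A hA => hVopen A (h𝒱V A hA)) (fun z _ => by
      obtain ⟨A, hA, hzA⟩ := h𝒱cov z; exact ⟨A, hA, hzA⟩)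
  set c0 : ℝ := L / (2*((n:ℝ)+2)) with hc0def
  have hc0 : 0 < c0 := by
    apply div_pos hL; positivity
  have hcast : (2*((n:ℝ)+2)) * c0 = L := by
    rw [hc0def]; field_simp
  set φ : Set W → W → ℝ := fun A z => Metric.infDist z Aᶜ with hφ
  have hφlip : ∀ A, ∀ z w : W, φ A z ≤ φ A w + dist z w :=
    fun A z w => Metric.infDist_le_infDist_add_dist
  have hφmem : ∀ A z, 0 < φ A z → z ∈ A := by
    intro A z h
    by_contra hz
    rw [hφ] at h
    simp only [Metric.infDist_zero_of_mem (mem_compl hz)] at h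
    exact lt_irrefl _ h
  have hφbig : ∀ z : W, ∃ A ∈ 𝒱, L ≤ φ A z := by
    intro z
    obtain ⟨A, hA, hball⟩ := hleb z (mem_univ z)
    refine ⟨A, hA, ?_⟩
    by_contra h
    push_neg at h
    obtain ⟨y, hy, hdy⟩ := (Metric.infDist_lt_iff (hne𝒱 A hA)).1 h
    exact hy (hball (by rwa [mem_ball, dist_comm]))
  set Wst : ℕ → Finset (Set W) → Set W := fun j σ =>
    {w | (∀ A ∈ σ, (2*(j:ℝ)+1)*c0 + c0/2 < φ A w) ∧
      (∀ A ∈ 𝒱, A ∉ σ → φ A w < (2*(j:ℝ)+1)*c0 - c0/2)} with hWst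
  refine ⟨(min c0 ε, fun i =>
    {S | ∃ σ : Finset (Set W), σ ⊆ 𝒱 ∧ σ.Nonempty ∧ S = Wst ((i:ℕ)+1) σ}),
    lt_min hc0 hε, min_le_right _ _, ?_, ?_, ?_⟩
  · -- covers
    intro z _
    obtain ⟨A₀, hA₀, hA₀L⟩ := hφbig z
    set σs : ℕ → Finset (Set W) := fun j => 𝒱.filter (fun A => 2*(j:ℝ)*c0 ≤ φ A z) with hσs
    have hσmono : ∀ j, σs (j+1) ⊆ σs j := by
      intro j A hA
      rcases Finset.mem_filter.1 hA with ⟨h1, h2⟩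
      refine Finset.mem_filter.2 ⟨h1, ?_⟩
      push_cast at h2 ⊢
      nlinarith [hc0.le]
    have hσA₀ : ∀ j, j ≤ n+2 → A₀ ∈ σs j := by
      intro j hj
      refine Finset.mem_filter.2 ⟨hA₀, le_trans ?_ hA₀L⟩
      rw [← hcast]
      have hj' : (j:ℝ) ≤ (n:ℝ)+2 := by exact_mod_cast hj
      nlinarith [hc0.le]
    have hσTz : ∀ A ∈ σs 1, z ∈ A := by
      intro A hA
      rcases Finset.mem_filter.1 hA with ⟨h1, h2⟩
      push_cast at h2
      exact hφmem A z (lt_of_lt_of_le (by nlinarith [hc0]) h2)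
    have hTzcard : (σs 1).card ≤ n + 1 := by
      apply hVmult
      · intro A hA
        exact h𝒱V A ((Finset.filter_subset _ _) hA)
      · exact ⟨z, mem_sInter.2 (fun A hA => hσTz A hA)⟩
    have hstab : ∃ j, j < n+1 ∧ σs (j+1+1) = σs (j+1) := by
      by_contra hcon
      push_neg at hcon
      have hchain := chain_card (fun i => σs (i+1)) (n+1)
        (fun j _ => hσmono (j+1)) (fun j hj => hcon j hj)
      have hchain' : (σs (n+1+1)).card + (n+1) ≤ (σs 1).card := hchain
      have h1 : 1 ≤ (σs (n+1+1)).card :=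
        Finset.card_pos.2 ⟨A₀, hσA₀ (n+2) (le_refl _)⟩
      omega
    obtain ⟨j, hj, hstabj⟩ := hstab
    refine mem_iUnion.2 ⟨⟨j, hj⟩, ?_⟩
    refine ⟨Wst (j+1) (σs (j+1)), ⟨σs (j+1), Finset.filter_subset _ _,
      ⟨A₀, hσA₀ (j+1) (by omega)⟩, rfl⟩, ?_⟩
    constructor
    · intro A hA
      rw [← hstabj] at hA
      rcases Finset.mem_filter.1 hA with ⟨_, h2⟩
      push_cast at h2 ⊢
      nlinarith [hc0]
    · intro A hA𝒱 hAσ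
      have hlt : ¬ (2*((j:ℝ)+1)*c0 ≤ φ A z) := by
        intro hcon2
        refine hAσ (Finset.mem_filter.2 ⟨hA𝒱, ?_⟩)
        push_cast
        linarith
      push_neg at hlt
      push_cast
      nlinarith [hc0]
  · -- separation
    intro i S hS S' hS' hne p hp q hq
    obtain ⟨σ₁, hσ₁sub, hσ₁ne, rfl⟩ := hS
    obtain ⟨σ₂, hσ₂sub, hσ₂ne, rfl⟩ := hS'
    have hσne : σ₁ ≠ σ₂ := fun h => hne (by rw [h])
    have hkey : ∀ (A : Set W) (u v : W) (T : ℝ), (T + c0/2 < φ A u) →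
        (φ A v < T - c0/2) → min c0 ε ≤ dist u v := by
      intro A u v T h1 h2
      have h3 := hφlip A u v
      have : c0 ≤ dist u v := by linarith
      exact le_trans (min_le_left _ _) this
    have hdiff : (∃ A ∈ σ₁, A ∉ σ₂) ∨ (∃ A ∈ σ₂, A ∉ σ₁) := by
      by_contra hcon
      push_neg at hcon
      exact hσne (Finset.Subset.antisymm hcon.1 hcon.2)
    rcases hdiff with ⟨A, hA1, hA2⟩ | ⟨A, hA2, hA1⟩
    · exact hkey A p q _ (hp.1 A hA1) (hq.2 A (hσ₁sub hA1) hA2)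
    · have := hkey A q p _ (hq.1 A hA2) (hp.2 A (hσ₂sub hA2) hA1)
      rwa [dist_comm] at this
  · -- mesh
    intro i S hS p hp q hq
    obtain ⟨σ₁, hσ₁sub, hσ₁ne, rfl⟩ := hS
    obtain ⟨A, hAσ⟩ := hσ₁ne
    have hA𝒱 := hσ₁sub hAσ
    have hppos : 0 < φ A p := by
      have := hp.1 A hAσ
      nlinarith
    have hqpos : 0 < φ A q := by
      have := hq.1 A hAσ
      nlinarith
    exact (hVdiam A (h𝒱V A hA𝒱) p (hφmem A p hppos) q (hφmem A q hqpos)).trans (by linarith)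

variable {Z : Type*} [PseudoMetricSpace Z]

/-- Absorption of a fine separated colored family into a coarser one. -/
theorem absorb {Nc : ℕ} {SA SB : Set Z} {sA sB mA mB t : ℝ}
    {F G : Fin Nc → Set (Set Z)} (hF : SepFam Nc SA sA mA F) (hG : SepFam Nc SB sB mB G)
    (ht : 0 ≤ t) (hmB : 0 ≤ mB) :
    ∃ H, SepFam Nc (SA ∪ SB) (min (sA - 2*(t+mB)) (min sB t)) (max (mA + 2*(t+mB)) mB) H := by
  classical
  -- nearness of a fine set to the color-i coarse family
  set near : Fin Nc → Set Z → Prop := fun i b => ∃ a ∈ F i, ∃ p ∈ b, ∃ q ∈ a, dist p q ≤ t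
    with hnear
  -- assigned coarse set
  set aOf : Fin Nc → Set Z → Set Z := fun i b =>
    if h : near i b then h.choose else ∅ with haOf
  have haOfSpec : ∀ i b, near i b → aOf i b ∈ F i ∧ ∃ p ∈ b, ∃ q ∈ aOf i b, dist p q ≤ t := by
    intro i b h
    rw [haOf]
    simp only [dif_pos h]
    exact ⟨h.choose_spec.1, h.choose_spec.2⟩
  -- the enlarged coarse sets
  set big : Fin Nc → Set Z → Set Z := fun i a =>
    a ∪ ⋃₀ {b | b ∈ G i ∧ near i b ∧ aOf i b = a} with hbig
  refine ⟨fun i => (big i '' F i) ∪ {b | b ∈ G i ∧ ¬ near i b}, ?_, ?_, ?_⟩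
  · -- covers
    rintro z (hz | hz)
    · obtain ⟨i, hzi⟩ := mem_iUnion.1 (hF.covers hz)
      obtain ⟨a, ha, hza⟩ := hzi
      exact mem_iUnion.2 ⟨i, ⟨big i a, Or.inl ⟨a, ha, rfl⟩, Or.inl hza⟩⟩
    · obtain ⟨i, hzi⟩ := mem_iUnion.1 (hG.covers hz)
      obtain ⟨b, hb, hzb⟩ := hzi
      by_cases hnb : near i b
      · refine mem_iUnion.2 ⟨i, ⟨big i (aOf i b), Or.inl ⟨aOf i b, (haOfSpec i b hnb).1, rfl⟩, ?_⟩⟩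
        exact Or.inr ⟨b, ⟨hb, hnb, rfl⟩, hzb⟩
      · exact mem_iUnion.2 ⟨i, ⟨b, Or.inr ⟨hb, hnb⟩, hzb⟩⟩
  · -- separation
    intro i A hA B hB hne p hp q hq
    -- points of big i a are within t + mB of a
    have hbigpt : ∀ a ∈ F i, ∀ x ∈ big i a, ∃ y ∈ a, dist x y ≤ t + mB := by
      intro a ha x hx
      rcases hx with hx | hx
      · exact ⟨x, hx, by simp [ht, hmB, dist_self]; positivity⟩
      · obtain ⟨b, ⟨hbG, hbnear, hbeq⟩, hxb⟩ := hx
        obtain ⟨_, p', hp', q', hq', hd⟩ := haOfSpec i b hbnear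
        rw [hbeq] at hq'
        refine ⟨q', hq', ?_⟩
        calc dist x q' ≤ dist x p' + dist p' q' := dist_triangle _ _ _
          _ ≤ mB + t := add_le_add (hG.meshd i b hbG x hxb p' hp') hd
          _ = t + mB := by ring
    -- fine sets in the same color are either equal or sB-separated
    have hGsep : ∀ b ∈ G i, ∀ b' ∈ G i, b ≠ b' → ∀ x ∈ b, ∀ y ∈ b', sB ≤ dist x y :=
      fun b hb b' hb' hne' => hG.sepd i b hb b' hb' hne'
    rcases hA with ⟨a, ha, rfl⟩ | ⟨hbG, hbnear⟩ <;> rcases hB with ⟨a', ha', rfl⟩ | ⟨hb'G, hb'near⟩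
    · -- big vs big
      have hane : a ≠ a' := fun h => hne (by rw [h])
      obtain ⟨y, hy, hxy⟩ := hbigpt a ha p hp
      obtain ⟨y', hy', hxy'⟩ := hbigpt a' ha' q hq
      have := hF.sepd i a ha a' ha' hane y hy y' hy'
      have htri : dist y y' ≤ dist y p + dist p q + dist q y' := by
        calc dist y y' ≤ dist y p + dist p y' := dist_triangle _ _ _
          _ ≤ dist y p + (dist p q + dist q y') := by linarith [dist_triangle p q y']
          _ = dist y p + dist p q + dist q y' := by ring
      rw [dist_comm y p] at htri
      rw [dist_comm q y'] at htri
      have : sA - 2*(t+mB) ≤ dist p q := by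
        have h1 : dist y' q ≤ t + mB := by rw [dist_comm]; exact hxy'
        linarith [hxy, hxy']
      exact le_trans (min_le_left _ _) this
    · -- big vs kept fine set
      rcases hp with hp | hp
      · -- p in the coarse core: kept b' is t-far from all of F i
        have : ¬ dist q p ≤ t := by
          intro hc
          exact hb'near ⟨a, ha, q, hq, p, hp, hc⟩
        push_neg at this
        rw [dist_comm] at this
        exact le_trans (min_le_right _ _) (le_trans (min_le_right _ _) this.le)
      · -- p in an absorbed fine set
        obtain ⟨b, ⟨hbG, hbnear, hbeq⟩, hpb⟩ := hp
        have hbne : b ≠ B := by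
          intro h
          rw [h] at hbnear
          exact hb'near hbnear
        exact le_trans (min_le_right _ _) (le_trans (min_le_left _ _)
          (hGsep b hbG B hb'G hbne p hpb q hq))
    · -- kept vs big (symmetric)
      rcases hq with hq | hq
      · have : ¬ dist p q ≤ t := by
          intro hc
          exact hbnear ⟨a', ha', p, hp, q, hq, hc⟩
        push_neg at this
        exact le_trans (min_le_right _ _) (le_trans (min_le_right _ _) this.le)
      · obtain ⟨b', ⟨hb'G, hb'near, hb'eq⟩, hqb'⟩ := hq
        have hbne : A ≠ b' := by
          intro h
          rw [← h] at hb'near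
          exact hbnear hb'near
        exact le_trans (min_le_right _ _) (le_trans (min_le_left _ _)
          (hGsep A hbG b' hb'G hbne p hp q hqb'))
    · -- kept vs kept
      exact le_trans (min_le_right _ _) (le_trans (min_le_left _ _)
        (hGsep A hbG B hb'G hne p hp q hq))
  · -- mesh
    intro i A hA p hp q hq
    have hbigpt : ∀ a ∈ F i, ∀ x ∈ big i a, ∃ y ∈ a, dist x y ≤ t + mB := by
      intro a ha x hx
      rcases hx with hx | hx
      · exact ⟨x, hx, by simp [dist_self]; positivity⟩
      · obtain ⟨b, ⟨hbG, hbnear, hbeq⟩, hxb⟩ := hx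
        obtain ⟨_, p', hp', q', hq', hd⟩ := haOfSpec i b hbnear
        rw [hbeq] at hq'
        refine ⟨q', hq', ?_⟩
        calc dist x q' ≤ dist x p' + dist p' q' := dist_triangle _ _ _
          _ ≤ mB + t := add_le_add (hG.meshd i b hbG x hxb p' hp') hd
          _ = t + mB := by ring
    rcases hA with ⟨a, ha, rfl⟩ | ⟨hbG, _⟩
    · obtain ⟨y, hy, hxy⟩ := hbigpt a ha p hp
      obtain ⟨y', hy', hxy'⟩ := hbigpt a ha q hq
      have hm := hF.meshd i a ha y hy y' hy'
      have : dist p q ≤ (t+mB) + mA + (t+mB) := by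
        calc dist p q ≤ dist p y + dist y q := dist_triangle _ _ _
          _ ≤ dist p y + (dist y y' + dist y' q) := by linarith [dist_triangle y y' q]
          _ ≤ (t+mB) + (mA + (t+mB)) := by
              have h1 : dist y' q ≤ t + mB := by rw [dist_comm]; exact hxy'
              linarith [hxy]
          _ = (t+mB) + mA + (t+mB) := by ring
      exact le_trans (by linarith) (le_max_left _ _)
    · exact le_trans (hG.meshd i A hbG p hp q hq) (le_max_right _ _)

/-- Pull back a separated colored family through quasi-homothetic charts on separated pieces. -/
theorem pieces_sepFam {Z W : Type*} [PseudoMetricSpace Z] [PseudoMetricSpace W]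
    {Nc : ℕ} {ι : Type*} (P : ι → Set Z) (f : ι → Z → W)
    {σ ε g μ Λ : ℝ} (hΛ : 0 < Λ) (hμ : 0 ≤ μ) {G : Fin Nc → Set (Set W)}
    (hG : SepFam Nc univ σ ε G)
    (hsepP : ∀ j j' : ι, j ≠ j' → ∀ p ∈ P j, ∀ q ∈ P j', g ≤ dist p q)
    (hlow : ∀ j, ∀ p ∈ P j, ∀ q ∈ P j, dist p q ≤ μ * dist (f j p) (f j q))
    (hhigh : ∀ j, ∀ p ∈ P j, ∀ q ∈ P j, dist (f j p) (f j q) ≤ Λ * dist p q) :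
    SepFam Nc (⋃ j, P j) (min g (σ/Λ)) (μ*ε)
      (fun i => {M | ∃ j, ∃ A ∈ G i, M = {z | z ∈ P j ∧ f j z ∈ A}}) := by
  classical
  refine ⟨?_, ?_, ?_⟩
  · intro z hz
    obtain ⟨j, hj⟩ := mem_iUnion.1 hz
    obtain ⟨i, hi⟩ := mem_iUnion.1 (hG.covers (mem_univ (f j z)))
    obtain ⟨A, hA, hfA⟩ := hi
    exact mem_iUnion.2 ⟨i, ⟨{z | z ∈ P j ∧ f j z ∈ A}, ⟨j, A, hA, rfl⟩, ⟨hj, hfA⟩⟩⟩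
  · intro i M hM M' hM' hne p hp q hq
    obtain ⟨j, A, hA, rfl⟩ := hM
    obtain ⟨j', A', hA', rfl⟩ := hM'
    by_cases hjj : j = j'
    · subst hjj
      have hAA : A ≠ A' := by
        intro h
        exact hne (by rw [h])
      have h1 := hG.sepd i A hA A' hA' hAA (f j p) hp.2 (f j q) hq.2
      have h2 := hhigh j p hp.1 q hq.1
      have : σ / Λ ≤ dist p q := by
        rw [div_le_iff₀ hΛ]
        calc σ ≤ dist (f j p) (f j q) := h1
          _ ≤ Λ * dist p q := h2
          _ = dist p q * Λ := by ring
      exact le_trans (min_le_right _ _) this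
    · exact le_trans (min_le_left _ _) (hsepP j j' hjj p hp.1 q hq.1)
  · intro i M hM p hp q hq
    obtain ⟨j, A, hA, rfl⟩ := hM
    calc dist p q ≤ μ * dist (f j p) (f j q) := hlow j p hp.1 q hq.1
      _ ≤ μ * ε := mul_le_mul_of_nonneg_left (hG.meshd i A hA (f j p) hp.2 (f j q) hq.2) hμ

theorem scaled_dist {X Y : Type*} [PseudoMetricSpace X] [PseudoMetricSpace Y] (a b : ℝ≥0)
    (z w : Scaled a X × Scaled b Y) :
    dist z w = max ((a:ℝ) * dist z.1.unmk w.1.unmk) ((b:ℝ) * dist z.2.unmk w.2.unmk) := by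
  rw [Prod.dist_eq]; rfl

/-- Cardinality bound for separated sets via a totally bounded ambient space. -/
theorem sep_card_bound {X : Type*} [MetricSpace X] [CompactSpace X] (r : ℝ) (hr : 0 < r) :
    ∃ P : ℕ, 0 < P ∧ ∀ s : Finset X, (∀ u ∈ s, ∀ v ∈ s, u ≠ v → r < dist u v) →
      s.card ≤ P := by
  classical
  obtain ⟨t, htfin, htcov⟩ := (Metric.totallyBounded_iff.1
    (isCompact_univ (X := X)).totallyBounded) (r/2) (by linarith)
  refine ⟨htfin.toFinset.card + 1, Nat.succ_pos _, ?_⟩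
  intro s hs
  refine le_trans (card_le_of_separated s hs htfin.toFinset ?_) (Nat.le_succ _)
  intro u _
  have := htcov (mem_univ u)
  simp only [mem_iUnion] at this
  obtain ⟨c, hct, hc⟩ := this
  exact ⟨c, htfin.mem_toFinset.2 hct, le_of_lt (by simpa [mem_ball] using hc)⟩

theorem key {X Y : Type*} [MetricSpace X] [MetricSpace Y] [CompactSpace X] [CompactSpace Y]
    (hX : LocallySelfSimilar X) (hY : LocallySelfSimilar Y)
    {n : ℕ} (hdim : CovDimLE (X × Y) n) :
    ∃ δ : ℝ, δ ∈ Set.Ioo (0:ℝ) 1 ∧ ∃ τ₀ : ℝ, 0 < τ₀ ∧ ∀ τ : ℝ, 0 < τ → τ < τ₀ →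
      ∀ (a b : ℝ≥0), 1 ≤ a → 1 ≤ b →
      ∃ U : Set (Set (Scaled a X × Scaled b Y)), IsLMNCover U Set.univ (δ * τ) τ (n + 1) := by
  classical
  obtain ⟨lamX, hlamX, R0X, hR0X, hssX⟩ := hX
  obtain ⟨lamY, hlamY, R0Y, hR0Y, hssY⟩ := hY
  set lam : ℝ := max lamX lamY with hlamdef
  have hlam1 : 1 ≤ lam := le_trans hlamX (le_max_left _ _)
  have hlampos : 0 < lam := by linarith
  have hlamXpos : 0 < lamX := by linarith
  have hlamYpos : 0 < lamY := by linarith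
  rcases isEmpty_or_nonempty (X × Y) with hemp | hne
  · -- empty case
    refine ⟨1/2, by norm_num, 1, by norm_num, ?_⟩
    intro τ hτ hττ a b ha hb
    have : IsEmpty (Scaled a X × Scaled b Y) :=
      ⟨fun z => hemp.false ((⟨z.1.unmk, z.2.unmk⟩ : X × Y))⟩
    refine ⟨∅, ?_, ?_, ?_, ?_, ?_⟩
    · intro V hV; exact absurd hV (notMem_empty V)
    · intro z _; exact (this.false z).elim
    · exact ⟨fun _ => ∅, by simp, fun i => by simp [Set.Pairwise]⟩
    · simp [meshF]
    · unfold lebesgueF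
      exact le_iInf fun z => (this.false z).elim
  have hXne : Nonempty X := ⟨hne.some.1⟩
  have hYne : Nonempty Y := ⟨hne.some.2⟩
  -- separated-set cardinality bounds
  obtain ⟨PX, hPXpos, hPXbound⟩ := sep_card_bound (X := X) (1/(8*lamX)) (by positivity)
  obtain ⟨PY, hPYpos, hPYbound⟩ := sep_card_bound (X := Y) (1/(8*lamY)) (by positivity)
  -- base covering generator
  have hbase : ∀ ε : ℝ, 0 < ε → ∃ p : ℝ × (Fin (n+1) → Set (Set (X × Y))),
      0 < p.1 ∧ p.1 ≤ ε ∧ SepFam (n+1) univ p.1 ε p.2 :=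
    exists_base_cover isCompact_univ hdim
  -- the scale sequence
  let Sh : ℕ → {x : ℝ // 0 < x ∧ x ≤ 1/2} := fun c => Nat.rec
    ⟨1/2, by norm_num⟩
    (fun _ ih => ⟨min (ih.1/4) (min
        ((hbase (ih.1/(8*lam)) (by have := ih.2.1; positivity)).choose.1 / lam) (1/2)),
      ⟨lt_min (by have := ih.2.1; linarith)
        (lt_min (div_pos (hbase (ih.1/(8*lam)) (by have := ih.2.1; positivity)).choose_spec.1
          hlampos) (by norm_num)),
       le_trans (min_le_right _ _) (min_le_right _ _)⟩⟩) c
  set σC : ℕ → ℝ := fun c =>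
    (hbase ((Sh c).1/(8*lam)) (by have := (Sh c).2.1; positivity)).choose.1 with hσC
  set famC : ℕ → (Fin (n+1) → Set (Set (X × Y))) := fun c =>
    (hbase ((Sh c).1/(8*lam)) (by have := (Sh c).2.1; positivity)).choose.2 with hfamC
  have hfam : ∀ c, 0 < σC c ∧ σC c ≤ (Sh c).1/(8*lam) ∧
      SepFam (n+1) univ (σC c) ((Sh c).1/(8*lam)) (famC c) := fun c =>
    (hbase ((Sh c).1/(8*lam)) (by have := (Sh c).2.1; positivity)).choose_spec
  have hSsucc4 : ∀ c, (Sh (c+1)).1 ≤ (Sh c).1/4 := fun c => min_le_left _ _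
  have hSsuccσ : ∀ c, (Sh (c+1)).1 ≤ σC c / lam := fun c =>
    le_trans (min_le_right _ _) (min_le_left _ _)

  have hSle : ∀ c, (Sh c).1 ≤ 1/2 := fun c => (Sh c).2.2
  have hSpos : ∀ c, 0 < (Sh c).1 := fun c => (Sh c).2.1
  set m : ℕ := PX * PY with hm
  set Rm : ℝ := 2*R0X + 2*R0Y + 2 with hRm
  have hRmpos : 0 < Rm := by have := hR0X; have := hR0Y; rw [hRm]; linarith
  refine ⟨(Sh m).1/4, ⟨by have := hSpos m; linarith, by have := hSle m; linarith⟩,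
    1/Rm, by positivity, ?_⟩
  intro τ hτ hττ a b ha hb
  set K : ℝ := 1/τ with hKdef
  have hKpos : 0 < K := by positivity
  have hτK : τ * K = 1 := by rw [hKdef]; field_simp
  have hKRm : Rm < K := by
    rw [hKdef]
    have h := one_div_lt_one_div_of_lt hτ hττ
    rwa [one_div_one_div] at h
  have ha1 : (1:ℝ) ≤ (a:ℝ) := by exact_mod_cast ha
  have hb1 : (1:ℝ) ≤ (b:ℝ) := by exact_mod_cast hb
  have hapos : (0:ℝ) < (a:ℝ) := by linarith
  have hbpos : (0:ℝ) < (b:ℝ) := by linarith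
  set Rx : ℝ := (a:ℝ)*K with hRxdef
  set Ry : ℝ := (b:ℝ)*K with hRydef
  have hRxpos : 0 < Rx := by positivity
  have hRypos : 0 < Ry := by positivity
  have hKRx : K ≤ Rx := by
    rw [hRxdef]; nlinarith
  have hKRy : K ≤ Ry := by
    rw [hRydef]; nlinarith
  have hRxR0 : R0X ≤ Rx := by rw [hRm] at hKRm; nlinarith [hR0Y]
  have hRyR0 : R0Y ≤ Ry := by rw [hRm] at hKRm; nlinarith [hR0X]
  have hRxR0' : R0X ≤ Rx/2 := by rw [hRm] at hKRm; nlinarith [hR0Y]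
  have hRyR0' : R0Y ≤ Ry/2 := by rw [hRm] at hKRm; nlinarith [hR0X]
  set rX : ℝ := 1/(4*Rx) with hrXdef
  set rY : ℝ := 1/(4*Ry) with hrYdef
  have hrXpos : 0 < rX := by positivity
  have hrYpos : 0 < rY := by positivity
  -- nets
  obtain ⟨netX, hnetXsep, hnetXcov⟩ := exists_net (isCompact_univ (X := X)) rX hrXpos
  obtain ⟨netY, hnetYsep, hnetYcov⟩ := exists_net (isCompact_univ (X := Y)) rY hrYpos
  -- charts on the pieces
  have hchartX : ∀ j : X, ∃ f : X → X, ∀ x ∈ closedBall j rX, ∀ y ∈ closedBall j rX,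
      dist x y ≤ (lamX/Rx) * dist (f x) (f y) ∧ dist (f x) (f y) ≤ (lamX*Rx) * dist x y := by
    intro j
    have hdiam : Metric.diam (closedBall j rX) ≤ 1/Rx := by
      refine le_trans (diam_closedBall hrXpos.le) ?_
      have h1 : (2:ℝ)*(1/(4*Rx)) = 1/(2*Rx) := by field_simp; ring
      rw [hrXdef, h1]
      exact one_div_le_one_div_of_le hRxpos (by linarith)
    obtain ⟨f0, hf0⟩ := hssX Rx hRxR0 (closedBall j rX) hdiam
    refine ⟨fun x => if h : x ∈ closedBall j rX then f0 ⟨x, h⟩ else x, ?_⟩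
    intro x hx y hy
    simp only [dif_pos hx, dif_pos hy]
    obtain ⟨h1, h2⟩ := hf0 ⟨x, hx⟩ ⟨y, hy⟩
    constructor
    · rw [div_mul_eq_mul_div, le_div_iff₀ (by positivity)]
      calc dist x y * Rx = Rx * dist x y := by ring
        _ = (Rx * dist x y / lamX) * lamX := (div_mul_cancel₀ _ (ne_of_gt hlamXpos)).symm
        _ ≤ dist (f0 ⟨x,hx⟩ : X) (f0 ⟨y,hy⟩) * lamX :=
            mul_le_mul_of_nonneg_right h1 (by positivity)
        _ = lamX * dist (f0 ⟨x,hx⟩ : X) (f0 ⟨y,hy⟩) := by ring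
    · calc dist (f0 ⟨x,hx⟩ : X) (f0 ⟨y,hy⟩) ≤ lamX * Rx * dist x y := h2
        _ = (lamX*Rx) * dist x y := by ring
  have hchartY : ∀ j : Y, ∃ f : Y → Y, ∀ x ∈ closedBall j rY, ∀ y ∈ closedBall j rY,
      dist x y ≤ (lamY/Ry) * dist (f x) (f y) ∧ dist (f x) (f y) ≤ (lamY*Ry) * dist x y := by
    intro j
    have hdiam : Metric.diam (closedBall j rY) ≤ 1/Ry := by
      refine le_trans (diam_closedBall hrYpos.le) ?_
      have h1 : (2:ℝ)*(1/(4*Ry)) = 1/(2*Ry) := by field_simp; ring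
      rw [hrYdef, h1]
      exact one_div_le_one_div_of_le hRypos (by linarith)
    obtain ⟨f0, hf0⟩ := hssY Ry hRyR0 (closedBall j rY) hdiam
    refine ⟨fun x => if h : x ∈ closedBall j rY then f0 ⟨x, h⟩ else x, ?_⟩
    intro x hx y hy
    simp only [dif_pos hx, dif_pos hy]
    obtain ⟨h1, h2⟩ := hf0 ⟨x, hx⟩ ⟨y, hy⟩
    constructor
    · rw [div_mul_eq_mul_div, le_div_iff₀ (by positivity)]
      calc dist x y * Ry = Ry * dist x y := by ring
        _ = (Ry * dist x y / lamY) * lamY := (div_mul_cancel₀ _ (ne_of_gt hlamYpos)).symm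
        _ ≤ dist (f0 ⟨x,hx⟩ : Y) (f0 ⟨y,hy⟩) * lamY :=
            mul_le_mul_of_nonneg_right h1 (by positivity)
        _ = lamY * dist (f0 ⟨x,hx⟩ : Y) (f0 ⟨y,hy⟩) := by ring
    · calc dist (f0 ⟨x,hx⟩ : Y) (f0 ⟨y,hy⟩) ≤ lamY * Ry * dist x y := h2
        _ = (lamY*Ry) * dist x y := by ring
  choose fX hfX using hchartX
  choose fY hfY using hchartY
  -- degree bounds for the net graphs
  have hdegX : ∀ u ∈ netX, (netX.filter (fun v => dist u v ≤ 4*rX)).card ≤ PX := by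
    intro u hu
    have hdiam : Metric.diam (closedBall u (4*rX)) ≤ 1/(Rx/2) := by
      refine le_trans (diam_closedBall (by positivity)) ?_
      have h1 : (2:ℝ)*(4*(1/(4*Rx))) = 1/(Rx/2) := by field_simp
      rw [hrXdef, h1]
    obtain ⟨f0, hf0⟩ := hssX (Rx/2) hRxR0' (closedBall u (4*rX)) hdiam
    set nb := netX.filter (fun v => dist u v ≤ 4*rX) with hnb
    have hnbball : ∀ v ∈ nb, v ∈ closedBall u (4*rX) := by
      intro v hv
      rw [mem_closedBall, dist_comm]
      exact (Finset.mem_filter.1 hv).2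
    set img : Finset X := nb.attach.image (fun v => (f0 ⟨v.1, hnbball v.1 v.2⟩ : X)) with himg
    have himgsep : ∀ x ∈ img, ∀ y ∈ img, x ≠ y → 1/(8*lamX) < dist x y := by
      intro x hx y hy hxy
      obtain ⟨v, _, rfl⟩ := Finset.mem_image.1 hx
      obtain ⟨w, _, rfl⟩ := Finset.mem_image.1 hy
      have hvw : v.1 ≠ w.1 := by
        intro h
        apply hxy
        congr 1
        exact Subtype.ext h
      have hsep := hnetXsep v.1 (Finset.mem_of_mem_filter _ v.2) w.1
        (Finset.mem_of_mem_filter _ w.2) hvw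
      have hl := (hf0 ⟨v.1, hnbball v.1 v.2⟩ ⟨w.1, hnbball w.1 w.2⟩).1
      calc 1/(8*lamX) = (Rx/2) * rX / lamX := by
            rw [hrXdef]; field_simp; ring
        _ < (Rx/2) * dist (v.1 : X) w.1 / lamX := by
            apply (div_lt_div_iff_of_pos_right (by positivity : (0:ℝ) < lamX)).2
            have := mul_lt_mul_of_pos_left hsep (show (0:ℝ) < Rx/2 by positivity)
            linarith
        _ ≤ dist ((f0 ⟨v.1, hnbball v.1 v.2⟩ : X)) (f0 ⟨w.1, hnbball w.1 w.2⟩) := hl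
    have himgcard : nb.card ≤ img.card := by
      rw [himg]
      rw [Finset.card_image_of_injOn]
      · simp
      · intro v _ w _ hvw
        replace hvw : (f0 ⟨v.1, hnbball v.1 v.2⟩ : X) = f0 ⟨w.1, hnbball w.1 w.2⟩ := hvw
        by_contra hne
        have hvw' : v.1 ≠ w.1 := fun h => hne (Subtype.ext h)
        have hsep := hnetXsep v.1 (Finset.mem_of_mem_filter _ v.2) w.1
          (Finset.mem_of_mem_filter _ w.2) hvw'
        have hl := (hf0 ⟨v.1, hnbball v.1 v.2⟩ ⟨w.1, hnbball w.1 w.2⟩).1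
        rw [hvw] at hl
        simp only [dist_self] at hl
        have hd : (0:ℝ) < dist (v.1:X) w.1 := lt_trans hrXpos hsep
        have hpos : (0:ℝ) < Rx/2 * dist (v.1:X) w.1 / lamX :=
          div_pos (mul_pos (by positivity) hd) hlamXpos
        linarith
    exact le_trans himgcard (hPXbound img himgsep)

  have hdegY : ∀ u ∈ netY, (netY.filter (fun v => dist u v ≤ 4*rY)).card ≤ PY := by
    intro u hu
    have hdiam : Metric.diam (closedBall u (4*rY)) ≤ 1/(Ry/2) := by
      refine le_trans (diam_closedBall (by positivity)) ?_
      have h1 : (2:ℝ)*(4*(1/(4*Ry))) = 1/(Ry/2) := by field_simp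
      rw [hrYdef, h1]
    obtain ⟨f0, hf0⟩ := hssY (Ry/2) hRyR0' (closedBall u (4*rY)) hdiam
    set nb := netY.filter (fun v => dist u v ≤ 4*rY) with hnb
    have hnbball : ∀ v ∈ nb, v ∈ closedBall u (4*rY) := by
      intro v hv
      rw [mem_closedBall, dist_comm]
      exact (Finset.mem_filter.1 hv).2
    set img : Finset Y := nb.attach.image (fun v => (f0 ⟨v.1, hnbball v.1 v.2⟩ : Y)) with himg
    have himgsep : ∀ x ∈ img, ∀ y ∈ img, x ≠ y → 1/(8*lamY) < dist x y := by
      intro x hx y hy hxy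
      obtain ⟨v, _, rfl⟩ := Finset.mem_image.1 hx
      obtain ⟨w, _, rfl⟩ := Finset.mem_image.1 hy
      have hvw : v.1 ≠ w.1 := by
        intro h
        apply hxy
        congr 1
        exact Subtype.ext h
      have hsep := hnetYsep v.1 (Finset.mem_of_mem_filter _ v.2) w.1
        (Finset.mem_of_mem_filter _ w.2) hvw
      have hl := (hf0 ⟨v.1, hnbball v.1 v.2⟩ ⟨w.1, hnbball w.1 w.2⟩).1
      calc 1/(8*lamY) = (Ry/2) * rY / lamY := by
            rw [hrYdef]; field_simp; ring
        _ < (Ry/2) * dist (v.1 : Y) w.1 / lamY := by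
            apply (div_lt_div_iff_of_pos_right (by positivity : (0:ℝ) < lamY)).2
            have := mul_lt_mul_of_pos_left hsep (show (0:ℝ) < Ry/2 by positivity)
            linarith
        _ ≤ dist ((f0 ⟨v.1, hnbball v.1 v.2⟩ : Y)) (f0 ⟨w.1, hnbball w.1 w.2⟩) := hl
    have himgcard : nb.card ≤ img.card := by
      rw [himg]
      rw [Finset.card_image_of_injOn]
      · simp
      · intro v _ w _ hvw
        replace hvw : (f0 ⟨v.1, hnbball v.1 v.2⟩ : Y) = f0 ⟨w.1, hnbball w.1 w.2⟩ := hvw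
        by_contra hne
        have hvw' : v.1 ≠ w.1 := fun h => hne (Subtype.ext h)
        have hsep := hnetYsep v.1 (Finset.mem_of_mem_filter _ v.2) w.1
          (Finset.mem_of_mem_filter _ w.2) hvw'
        have hl := (hf0 ⟨v.1, hnbball v.1 v.2⟩ ⟨w.1, hnbball w.1 w.2⟩).1
        rw [hvw] at hl
        simp only [dist_self] at hl
        have hd : (0:ℝ) < dist (v.1:Y) w.1 := lt_trans hrYpos hsep
        have hpos : (0:ℝ) < Ry/2 * dist (v.1:Y) w.1 / lamY :=
          div_pos (mul_pos (by positivity) hd) hlamYpos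
        linarith
    exact le_trans himgcard (hPYbound img himgsep)
  -- net colorings
  obtain ⟨colX, hcolX⟩ := exists_coloring PX hPXpos (fun u v => dist u v ≤ 4*rX)
    (fun u v h => by
      have h' : dist u v ≤ 4*rX := h
      show dist v u ≤ 4*rX
      rwa [dist_comm])
    (fun u => by show dist u u ≤ 4*rX; rw [dist_self]; positivity) netX hdegX
  obtain ⟨colY, hcolY⟩ := exists_coloring PY hPYpos (fun u v => dist u v ≤ 4*rY)
    (fun u v h => by
      have h' : dist u v ≤ 4*rY := h
      show dist v u ≤ 4*rY
      rwa [dist_comm])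
    (fun u => by show dist u u ≤ 4*rY; rw [dist_self]; positivity) netY hdegY
  -- pieces and charts on the scaled product
  set piece : X × Y → Set (Scaled a X × Scaled b Y) := fun v =>
    {z | z.1.unmk ∈ closedBall v.1 rX ∧ z.2.unmk ∈ closedBall v.2 rY} with hpiecedef
  set fm : X × Y → (Scaled a X × Scaled b Y) → X × Y := fun v z =>
    (fX v.1 z.1.unmk, fY v.2 z.2.unmk) with hfmdef
  set enc : X × Y → ℕ := fun v => (colX v.1).val * PY + (colY v.2).val with hencdef
  -- the class families
  have hclass : ∀ c : ℕ, SepFam (n+1)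
      (⋃ v : {v : X × Y // v.1 ∈ netX ∧ v.2 ∈ netY ∧ enc v = c}, piece v.1)
      ((Sh (c+1)).1 * τ) ((Sh c).1 * τ / 8)
      (fun i => {M | ∃ v : {v : X × Y // v.1 ∈ netX ∧ v.2 ∈ netY ∧ enc v = c},
        ∃ A ∈ famC c i, M = {z | z ∈ piece v.1 ∧ fm v.1 z ∈ A}}) := by
    intro c
    have hsepP : ∀ v w : {v : X × Y // v.1 ∈ netX ∧ v.2 ∈ netY ∧ enc v = c}, v ≠ w →
        ∀ p ∈ piece v.1, ∀ q ∈ piece w.1, τ/2 ≤ dist p q := by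
      intro v w hvw p hp q hq
      rw [hpiecedef] at hp hq
      by_cases h1 : v.1.1 = w.1.1
      · have h2 : v.1.2 ≠ w.1.2 := by
          intro h2
          exact hvw (Subtype.ext (Prod.ext h1 h2))
        have hcole : colY v.1.2 = colY w.1.2 := by
          have e1 := v.2.2.2
          have e2 := w.2.2.2
          simp only [hencdef] at e1 e2
          rw [h1] at e1
          have : (colY v.1.2).val = (colY w.1.2).val := by omega
          exact Fin.ext this
        have hdY : ¬ (dist v.1.2 w.1.2 ≤ 4*rY) := by
          intro hE
          exact hcolY v.1.2 v.2.2.1 w.1.2 w.2.2.1 h2 hE hcole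
        push_neg at hdY
        have hd : 2*rY ≤ dist p.2.unmk q.2.unmk := by
          have t1 : dist v.1.2 w.1.2 ≤ dist v.1.2 p.2.unmk + dist p.2.unmk q.2.unmk
              + dist q.2.unmk w.1.2 := dist_triangle4 _ _ _ _
          have t2 : dist v.1.2 p.2.unmk ≤ rY := by
            rw [dist_comm]; exact mem_closedBall.1 hp.2
          have t3 : dist q.2.unmk w.1.2 ≤ rY := mem_closedBall.1 hq.2
          linarith
        have hval : τ/2 = (b:ℝ)*(2*rY) := by
          rw [hrYdef, hRydef, hKdef]
          field_simp
          ring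
        rw [scaled_dist]
        refine le_trans ?_ (le_max_right _ _)
        rw [hval]
        exact mul_le_mul_of_nonneg_left hd hbpos.le
      · have hcole : colX v.1.1 = colX w.1.1 := by
          have e1 := v.2.2.2
          have e2 := w.2.2.2
          simp only [hencdef] at e1 e2
          have hy1 := (colY v.1.2).isLt
          have hy2 := (colY w.1.2).isLt
          have : (colX v.1.1).val = (colX w.1.1).val := by
            nlinarith [Nat.div_add_mod ((colX v.1.1).val * PY + (colY v.1.2).val) PY]
          exact Fin.ext this
        have hdX : ¬ (dist v.1.1 w.1.1 ≤ 4*rX) := by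
          intro hE
          exact hcolX v.1.1 v.2.1 w.1.1 w.2.1 h1 hE hcole
        push_neg at hdX
        have hd : 2*rX ≤ dist p.1.unmk q.1.unmk := by
          have t1 : dist v.1.1 w.1.1 ≤ dist v.1.1 p.1.unmk + dist p.1.unmk q.1.unmk
              + dist q.1.unmk w.1.1 := dist_triangle4 _ _ _ _
          have t2 : dist v.1.1 p.1.unmk ≤ rX := by
            rw [dist_comm]; exact mem_closedBall.1 hp.1
          have t3 : dist q.1.unmk w.1.1 ≤ rX := mem_closedBall.1 hq.1
          linarith
        have hval : τ/2 = (a:ℝ)*(2*rX) := by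
          rw [hrXdef, hRxdef, hKdef]
          field_simp
          ring
        rw [scaled_dist]
        refine le_trans ?_ (le_max_left _ _)
        rw [hval]
        exact mul_le_mul_of_nonneg_left hd hapos.le
    have hlow : ∀ v : {v : X × Y // v.1 ∈ netX ∧ v.2 ∈ netY ∧ enc v = c},
        ∀ p ∈ piece v.1, ∀ q ∈ piece v.1,
        dist p q ≤ (lam*τ) * dist (fm v.1 p) (fm v.1 q) := by
      intro v p hp q hq
      rw [hpiecedef] at hp hq
      rw [scaled_dist]
      have hXc : (a:ℝ) * dist p.1.unmk q.1.unmk ≤ (lam*τ) * dist (fm v.1 p) (fm v.1 q) := by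
        have h := (hfX v.1.1 p.1.unmk hp.1 q.1.unmk hq.1).1
        have hle1 : dist (fX v.1.1 p.1.unmk) (fX v.1.1 q.1.unmk) ≤
            dist (fm v.1 p) (fm v.1 q) := by
          rw [hfmdef, Prod.dist_eq]
          exact le_max_left _ _
        calc (a:ℝ) * dist p.1.unmk q.1.unmk
            ≤ (a:ℝ) * ((lamX/Rx) * dist (fX v.1.1 p.1.unmk) (fX v.1.1 q.1.unmk)) :=
              mul_le_mul_of_nonneg_left h hapos.le
          _ = (lamX*τ) * dist (fX v.1.1 p.1.unmk) (fX v.1.1 q.1.unmk) := by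
              rw [hRxdef, hKdef]
              field_simp
          _ ≤ (lam*τ) * dist (fm v.1 p) (fm v.1 q) := by
              apply mul_le_mul ?_ hle1 dist_nonneg (by positivity)
              have : lamX ≤ lam := le_max_left _ _
              nlinarith
      have hYc : (b:ℝ) * dist p.2.unmk q.2.unmk ≤ (lam*τ) * dist (fm v.1 p) (fm v.1 q) := by
        have h := (hfY v.1.2 p.2.unmk hp.2 q.2.unmk hq.2).1
        have hle1 : dist (fY v.1.2 p.2.unmk) (fY v.1.2 q.2.unmk) ≤
            dist (fm v.1 p) (fm v.1 q) := by
          rw [hfmdef, Prod.dist_eq]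
          exact le_max_right _ _
        calc (b:ℝ) * dist p.2.unmk q.2.unmk
            ≤ (b:ℝ) * ((lamY/Ry) * dist (fY v.1.2 p.2.unmk) (fY v.1.2 q.2.unmk)) :=
              mul_le_mul_of_nonneg_left h hbpos.le
          _ = (lamY*τ) * dist (fY v.1.2 p.2.unmk) (fY v.1.2 q.2.unmk) := by
              rw [hRydef, hKdef]
              field_simp
          _ ≤ (lam*τ) * dist (fm v.1 p) (fm v.1 q) := by
              apply mul_le_mul ?_ hle1 dist_nonneg (by positivity)
              have : lamY ≤ lam := le_max_right _ _
              nlinarith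
      exact max_le hXc hYc
    have hhigh : ∀ v : {v : X × Y // v.1 ∈ netX ∧ v.2 ∈ netY ∧ enc v = c},
        ∀ p ∈ piece v.1, ∀ q ∈ piece v.1,
        dist (fm v.1 p) (fm v.1 q) ≤ (lam*K) * dist p q := by
      intro v p hp q hq
      rw [hpiecedef] at hp hq
      rw [hfmdef, Prod.dist_eq]
      apply max_le
      · have h := (hfX v.1.1 p.1.unmk hp.1 q.1.unmk hq.1).2
        calc dist (fX v.1.1 p.1.unmk) (fX v.1.1 q.1.unmk)
            ≤ (lamX*Rx) * dist p.1.unmk q.1.unmk := h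
          _ = (lamX*K) * ((a:ℝ) * dist p.1.unmk q.1.unmk) := by
              rw [hRxdef]; ring
          _ ≤ (lam*K) * ((a:ℝ) * dist p.1.unmk q.1.unmk) := by
              apply mul_le_mul_of_nonneg_right ?_ (by positivity)
              have : lamX ≤ lam := le_max_left _ _
              nlinarith
          _ ≤ (lam*K) * dist p q := by
              apply mul_le_mul_of_nonneg_left ?_ (by positivity)
              rw [scaled_dist]
              exact le_max_left _ _
      · have h := (hfY v.1.2 p.2.unmk hp.2 q.2.unmk hq.2).2
        calc dist (fY v.1.2 p.2.unmk) (fY v.1.2 q.2.unmk)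
            ≤ (lamY*Ry) * dist p.2.unmk q.2.unmk := h
          _ = (lamY*K) * ((b:ℝ) * dist p.2.unmk q.2.unmk) := by
              rw [hRydef]; ring
          _ ≤ (lam*K) * ((b:ℝ) * dist p.2.unmk q.2.unmk) := by
              apply mul_le_mul_of_nonneg_right ?_ (by positivity)
              have : lamY ≤ lam := le_max_right _ _
              nlinarith
          _ ≤ (lam*K) * dist p q := by
              apply mul_le_mul_of_nonneg_left ?_ (by positivity)
              rw [scaled_dist]
              exact le_max_right _ _
    have hres := pieces_sepFam
      (fun v : {v : X × Y // v.1 ∈ netX ∧ v.2 ∈ netY ∧ enc v = c} => piece v.1)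
      (fun v => fm v.1) (show (0:ℝ) < lam*K by positivity)
      (show (0:ℝ) ≤ lam*τ by positivity) (hfam c).2.2 hsepP hlow hhigh
    refine hres.weaken subset_rfl ?_ ?_
    · apply le_min
      · have := hSle (c+1)
        have := hSpos (c+1)
        nlinarith
      · have h1 := hSsuccσ c
        have h2 : σC c / (lam*K) = (σC c / lam) * τ := by
          rw [hKdef]
          field_simp
        rw [h2]
        exact mul_le_mul_of_nonneg_right h1 hτ.le
    · have : (lam*τ) * ((Sh c).1/(8*lam)) = (Sh c).1 * τ / 8 := by
        field_simp
      rw [this]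

  -- fold the classes together
  have hfold : ∀ M : ℕ, ∃ H : Fin (n+1) → Set (Set (Scaled a X × Scaled b Y)),
      SepFam (n+1)
        (⋃ c ∈ Finset.range M,
          ⋃ v : {v : X × Y // v.1 ∈ netX ∧ v.2 ∈ netY ∧ enc v = c}, piece v.1)
        ((Sh M).1 * τ) ((1/2 - (Sh M).1) * τ) H := by
    intro M
    induction M with
    | zero =>
      refine ⟨fun _ => ∅, ⟨?_, ?_, ?_⟩⟩
      · simp
      · intro i A hA
        exact absurd hA (notMem_empty A)
      · intro i A hA
        exact absurd hA (notMem_empty A)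
    | succ M ih =>
      obtain ⟨H, hH⟩ := ih
      have hcl := hclass M
      have habs := absorb (t := (Sh M).1*τ/4) hH hcl
        (by have := hSpos M; nlinarith) (by have := hSpos M; nlinarith)
      obtain ⟨H', hH'⟩ := habs
      refine ⟨H', hH'.weaken ?_ ?_ ?_⟩
      · intro z hz
        simp only [mem_iUnion] at hz
        obtain ⟨c, hc, hzc⟩ := hz
        rw [Finset.mem_range] at hc
        rcases Nat.lt_succ_iff_lt_or_eq.1 hc with hlt | rfl
        · left
          simp only [mem_iUnion]
          exact ⟨c, Finset.mem_range.2 hlt, hzc⟩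
        · right
          exact mem_iUnion.2 hzc
      · have h4 := hSsucc4 M
        have hp0 := hSpos M
        have hp1 := hSpos (M+1)
        apply le_min
        · nlinarith
        · apply le_min
          · nlinarith
          · nlinarith
      · have h4 := hSsucc4 M
        have hp0 := hSpos M
        have hp1 := hSpos (M+1)
        have hl0 := hSle M
        have hl1 := hSle (M+1)
        apply max_le
        · nlinarith
        · nlinarith
  obtain ⟨H, hH⟩ := hfold m
  have hcovuniv : (univ : Set (Scaled a X × Scaled b Y)) ⊆
      ⋃ c ∈ Finset.range m,
        ⋃ v : {v : X × Y // v.1 ∈ netX ∧ v.2 ∈ netY ∧ enc v = c}, piece v.1 := by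
    intro z _
    obtain ⟨j, hj, hjd⟩ := hnetXcov z.1.unmk
    obtain ⟨k, hk, hkd⟩ := hnetYcov z.2.unmk
    have hencm : enc (j, k) < m := by
      rw [hencdef, hm]
      have h1 := (colX j).isLt
      have h2 := (colY k).isLt
      calc (colX j).val * PY + (colY k).val < (colX j).val * PY + PY := by omega
        _ = ((colX j).val + 1) * PY := by ring
        _ ≤ PX * PY := Nat.mul_le_mul_right PY (Nat.succ_le_of_lt h1)
    simp only [mem_iUnion]
    refine ⟨enc (j, k), Finset.mem_range.2 hencm, ⟨(j,k), ⟨hj, hk, rfl⟩⟩, ?_⟩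
    simp only [hpiecedef]
    exact ⟨mem_closedBall.2 hjd, mem_closedBall.2 hkd⟩
  have hfin : SepFam (n+1) (univ : Set (Scaled a X × Scaled b Y))
      ((Sh m).1 * τ) ((1/2 - (Sh m).1) * τ) H :=
    hH.weaken hcovuniv le_rfl le_rfl
  -- enlarge by ρ and finish
  set ρ : ℝ := (Sh m).1/4 * τ with hρdef
  have hρpos : 0 < ρ := by have := hSpos m; positivity
  refine ⟨⋃ i, (fun A => ⋃ p ∈ A, ball p ρ) '' (H i), ?_, ?_, ?_, ?_, ?_⟩
  · -- open
    intro V hV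
    simp only [mem_iUnion, mem_image] at hV
    obtain ⟨i, A, hA, rfl⟩ := hV
    exact isOpen_biUnion (fun p _ => isOpen_ball)
  · -- covering
    intro z _
    have := hfin.covers (mem_univ z)
    simp only [mem_iUnion] at this
    obtain ⟨i, A, hA, hzA⟩ := this
    refine mem_sUnion.2 ⟨⋃ p ∈ A, ball p ρ, ?_, ?_⟩
    · simp only [mem_iUnion, mem_image]
      exact ⟨i, A, hA, rfl⟩
    · exact mem_biUnion hzA (mem_ball_self hρpos)
  · -- colored
    refine ⟨fun i => (fun A => ⋃ p ∈ A, ball p ρ) '' (H i), rfl, ?_⟩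
    intro i D hD D' hD' hne
    obtain ⟨A, hA, rfl⟩ := hD
    obtain ⟨A', hA', rfl⟩ := hD'
    have hAA : A ≠ A' := fun h => hne (by rw [h])
    rw [Set.disjoint_left]
    intro w hw hw'
    simp only [mem_iUnion] at hw hw'
    obtain ⟨p, hp, hwp⟩ := hw
    obtain ⟨q, hq, hwq⟩ := hw'
    have hsep := hfin.sepd i A hA A' hA' hAA p hp q hq
    rw [mem_ball] at hwp hwq
    have htri : dist p q ≤ dist w p + dist w q := dist_triangle_left _ _ _
    rw [hρdef] at hwp hwq
    have := hSpos m
    nlinarith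
  · -- mesh
    rw [meshF]
    refine iSup₂_le fun V hV => ?_
    simp only [mem_iUnion, mem_image] at hV
    obtain ⟨i, A, hA, rfl⟩ := hV
    refine EMetric.diam_le fun w hw w' hw' => ?_
    simp only [mem_iUnion] at hw hw'
    obtain ⟨p, hp, hwp⟩ := hw
    obtain ⟨q, hq, hwq⟩ := hw'
    rw [mem_ball] at hwp hwq
    have hm := hfin.meshd i A hA p hp q hq
    rw [edist_dist]
    apply ENNReal.ofReal_le_ofReal
    have h4 : dist w w' ≤ dist w p + dist p q + dist q w' := dist_triangle4 _ _ _ _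
    have hl := hSle m
    have hq' : dist q w' ≤ ρ := by rw [dist_comm]; exact hwq.le
    rw [hρdef] at hwp hq'
    have hp0 := hSpos m
    nlinarith
  · -- Lebesgue number
    rw [lebesgueF]
    refine le_iInf₂ fun z _ => ?_
    have := hfin.covers (mem_univ z)
    simp only [mem_iUnion] at this
    obtain ⟨i, A, hA, hzA⟩ := this
    refine le_iSup₂_of_le (⋃ p ∈ A, ball p ρ) ?_ ?_
    · refine mem_iUnion.2 ⟨i, ?_⟩
      exact mem_image_of_mem _ hA
    · refine EMetric.le_infEdist.2 fun y hy => ?_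
      rw [edist_dist]
      apply ENNReal.ofReal_le_ofReal
      by_contra hc
      push_neg at hc
      apply hy
      have : y ∈ ball z ρ := by
        rw [mem_ball, dist_comm]
        calc dist z y < (Sh m).1/4 * τ := hc
          _ = ρ := by rw [hρdef]
      exact mem_biUnion hzA this

theorem covdim_of_eq {Z : Type*} [TopologicalSpace Z] {n : ℕ} (hn : covDim Z = (n : ℕ∞)) :
    CovDimLE Z n := by
  classical
  have hmono : ∀ m m' : ℕ, m ≤ m' → CovDimLE Z m → CovDimLE Z m' := by
    intro m m' hmm h U hUo hUc
    obtain ⟨V, h1, h2, h3, h4⟩ := h U hUo hUc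
    exact ⟨V, h1, h2, h3, fun s hs hne => le_trans (h4 s hs hne) (by omega)⟩
  have hex : ∃ x ∈ {k : ℕ∞ | ∃ m : ℕ, k = m ∧ CovDimLE Z m}, x ≤ (n : ℕ∞) := by
    by_contra hcon
    push_neg at hcon
    have h1 : (n:ℕ∞) + 1 ≤ covDim Z := by
      rw [covDim]
      apply le_sInf
      intro x hx
      exact Order.add_one_le_of_lt (hcon x hx)
    rw [hn] at h1
    have h2 : ((n+1 : ℕ) : ℕ∞) ≤ ((n:ℕ) : ℕ∞) := by
      push_cast
      exact h1
    have h3 : n + 1 ≤ n := by exact_mod_cast h2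
    omega
  obtain ⟨x, ⟨m, rfl, hm⟩, hle⟩ := hex
  have hmn : m ≤ n := by exact_mod_cast hle
  exact hmono m n hmn hm

end SsimProof

open Metric Set Filter ENNReal NNReal PaperDefs

/-- **Proposition (ssim).** If `X`, `Y` are compact locally self-similar metric spaces and
`n = dim (X × Y)`, then the family `{a X × b Y : a, b ≥ 1}` has `ℓ-dim ≤ n` uniformly. -/
theorem unif_elldim_of_locally_self_similar
    {X Y : Type*} [MetricSpace X] [MetricSpace Y] [CompactSpace X] [CompactSpace Y]
    (hX : LocallySelfSimilar X) (hY : LocallySelfSimilar Y)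
    (n : ℕ) (hn : covDim (X × Y) = (n : ℕ∞)) :
    UnifElldimLE (fun p : {p : ℝ≥0 × ℝ≥0 // 1 ≤ p.1 ∧ 1 ≤ p.2} =>
      Scaled p.1.1 X × Scaled p.1.2 Y) n := by
  obtain ⟨δ, hδ, τ₀, hτ₀, hkey⟩ := SsimProof.key hX hY (SsimProof.covdim_of_eq hn)
  exact ⟨δ, hδ, τ₀, hτ₀, fun τ hτ hττ i => hkey τ hτ hττ i.1.1 i.1.2 i.2.1 i.2.2⟩
end
end
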